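/- arXiv:2103.11946 — 3 statements merged into one kernel-verified Lean document; each statement's English description precedes it below -/
import Mathlib

section
/- Let k ≥ 1, let π be a non-crossing pair partition of {1,…,2k} regarded as a permutation (a fixed-point-free involution), and let γ be the cyclic permutation of {1,…,2k} given by γ(r) = r+1 for r < 2k and γ(2k) = 1. Then the permutation γ∘π has exactly k+1 cycles, and every cycle of γ∘π consists entirely of odd numbers or entirely of even numbers. -/
noncomputable section

/-- A non-crossing pair partition of `Fin m`: a fixed-point-free involution with no
crossing `a < b < c < d`, `π a = c`, `π b = d`. -/
def IsNCPairPartition {m : ℕ} (π : Equiv.Perm (Fin m)) : Prop :=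
  (∀ r, π r ≠ r) ∧ (∀ r, π (π r) = r) ∧
  ¬ ∃ a b c d : Fin m, a < b ∧ b < c ∧ c < d ∧ π a = c ∧ π b = d

/-- The set of cycles (orbits, including fixed points) of a permutation. -/
def permCycles {m : ℕ} (σ : Equiv.Perm (Fin m)) : Set (Set (Fin m)) :=
  {c : Set (Fin m) | ∃ x : Fin m, c = {y : Fin m | σ.SameCycle x y}}

lemma even_card_invol {α : Type*} [DecidableEq α] (f : α → α) (s : Finset α)
    (hmem : ∀ x ∈ s, f x ∈ s) (hinv : ∀ x ∈ s, f (f x) = x) (hne : ∀ x ∈ s, f x ≠ x) :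
    Even s.card := by
  induction s using Finset.strongInduction with
  | _ s ih =>
    rcases s.eq_empty_or_nonempty with rfl | ⟨x, hx⟩
    · simp
    · have hfx := hmem x hx
      have hxne := hne x hx
      set s' := (s.erase x).erase (f x) with hs'
      have hss : s' ⊂ s := by
        refine Finset.ssubset_of_subset_of_ssubset ?_ (Finset.erase_ssubset hx)
        exact Finset.erase_subset _ _
      have hmem' : ∀ y ∈ s', y ∈ s := fun y hy => hss.1 hy
      have key : ∀ y ∈ s', f y ∈ s' := by
        intro y hy
        have hys := hmem' y hy
        have h1 : y ≠ f x := (Finset.mem_erase.1 hy).1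
        have h2 : y ≠ x := (Finset.mem_erase.1 (Finset.mem_erase.1 hy).2).1
        refine Finset.mem_erase.2 ⟨?_, Finset.mem_erase.2 ⟨?_, hmem y hys⟩⟩
        · intro h; apply h2; rw [← hinv x hx, ← h, hinv y hys]
        · intro h; apply h1; rw [← h, hinv y hys]
      have := ih s' hss (fun y hy => key y hy) (fun y hy => hinv y (hmem' y hy))
        (fun y hy => hne y (hmem' y hy))
      have hcard : s'.card + 2 = s.card := by
        rw [hs', Finset.card_erase_of_mem, Finset.card_erase_of_mem hx]
        · have : 2 ≤ s.card := Finset.one_lt_card.2 ⟨x, hx, f x, hfx, Ne.symm hxne⟩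
          omega
        · exact Finset.mem_erase.2 ⟨hxne, hfx⟩
      obtain ⟨c, hc⟩ := this
      exact ⟨c + 1, by omega⟩

section NCP
variable {m : ℕ} {π : Equiv.Perm (Fin m)} (hπ : IsNCPairPartition π)

include hπ

lemma ncp_closure : ∀ x y : Fin m, x < π x → x < y → y < π x → x < π y ∧ π y < π x := by
  obtain ⟨hfp, hinv, hncr⟩ := hπ
  intro x y h1 h2 h3
  have hyx : π y ≠ x := fun h => absurd (by rw [← h, hinv]) (ne_of_lt h3)
  have hyy : π y ≠ π x := fun h => absurd (π.injective h) (ne_of_gt h2)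
  rcases lt_trichotomy (π y) x with h | h | h
  · exact absurd ⟨π y, x, y, π x, h, h2, h3, by rw [hinv], rfl⟩ hncr
  · exact absurd h hyx
  · refine ⟨h, ?_⟩
    rcases lt_trichotomy (π y) (π x) with h' | h' | h'
    · exact h'
    · exact absurd h' hyy
    · exact absurd ⟨x, y, π x, π y, h2, h3, h', rfl, rfl⟩ hncr

lemma ncp_parity_lt : ∀ x : Fin m, x < π x → (π x : ℕ) % 2 ≠ (x : ℕ) % 2 := by
  intro x hx
  have hcl := ncp_closure hπ
  have heven : Even (Finset.Ioo x (π x)).card := by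
    refine even_card_invol π _ ?_ ?_ ?_
    · intro y hy
      rw [Finset.mem_Ioo] at hy ⊢
      exact hcl x y hx hy.1 hy.2
    · intro y _; exact hπ.2.1 y
    · intro y _; exact hπ.1 y
  rw [Fin.card_Ioo] at heven
  obtain ⟨c, hc⟩ := heven
  have : (x : ℕ) < (π x : ℕ) := hx
  omega

lemma ncp_parity : ∀ x : Fin m, (π x : ℕ) % 2 ≠ (x : ℕ) % 2 := by
  intro x
  rcases lt_or_gt_of_ne (Ne.symm (hπ.1 x)) with h | h
  · exact ncp_parity_lt hπ x h
  · have := ncp_parity_lt hπ (π x) (by rw [hπ.2.1]; exact h)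
    rw [hπ.2.1] at this
    exact Ne.symm this

lemma ncp_adjacent (hm : 0 < m) : ∃ a : ℕ, ∃ h1 : a + 1 < m,
    π ⟨a, by omega⟩ = ⟨a + 1, h1⟩ := by
  classical
  have hfp := hπ.1
  have hinv := hπ.2.1
  set P : ℕ → Prop := fun d => ∃ x : Fin m, x < π x ∧ (π x : ℕ) - (x : ℕ) = d with hP
  have hPn : ∃ d, P d := by
    have x : Fin m := ⟨0, hm⟩
    rcases lt_or_gt_of_ne (Ne.symm (hfp x)) with h | h
    · exact ⟨_, x, h, rfl⟩
    · exact ⟨_, π x, by rw [hinv]; exact h, rfl⟩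
  obtain ⟨x, hxlt, hxd⟩ := Nat.find_spec hPn
  have hd1 : Nat.find hPn = 1 := by
    by_contra hne
    have hd_pos : 1 ≤ Nat.find hPn := by
      rcases Nat.eq_zero_or_pos (Nat.find hPn) with h | h
      · rw [h] at hxd; have : (x:ℕ) < (π x : ℕ) := hxlt; omega
      · exact h
    have hd2 : 2 ≤ Nat.find hPn := by omega
    have hxv : (x:ℕ) + 1 < m := by
      have : (x:ℕ) < (π x : ℕ) := hxlt
      have := (π x).2; omega
    set y : Fin m := ⟨(x:ℕ) + 1, hxv⟩ with hy
    have hyv : (y : ℕ) = (x : ℕ) + 1 := rfl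
    have hxy : x < y := by simp [hy, Fin.lt_def]
    have hylt : y < π x := by
      rw [Fin.lt_def]
      have : (x:ℕ) < (π x : ℕ) := hxlt
      omega
    obtain ⟨h1, h2⟩ := ncp_closure hπ x y hxlt hxy hylt
    have hylt' : y < π y := by
      rw [Fin.lt_def] at h1 ⊢
      have : π y ≠ y := hfp y
      rw [Fin.ne_iff_vne] at this
      omega
    have : P ((π y : ℕ) - (y : ℕ)) := ⟨y, hylt', rfl⟩
    have hlt : (π y : ℕ) - (y : ℕ) < Nat.find hPn := by
      rw [← hxd]
      have ha : (x:ℕ) < (π y : ℕ) := h1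
      have hb : (π y : ℕ) < (π x : ℕ) := h2
      omega
    exact absurd (Nat.find_min hPn hlt this) (by simp [this])
  refine ⟨(x : ℕ), by rw [← hd1, ← hxd]; have := (π x).2; have : (x:ℕ) < (π x:ℕ) := hxlt; omega, ?_⟩
  have hv : (π x : ℕ) = (x : ℕ) + 1 := by
    have : (x:ℕ) < (π x : ℕ) := hxlt
    omega
  have hxeta : (⟨(x:ℕ), by omega⟩ : Fin m) = x := Fin.eta x x.2
  rw [hxeta]
  exact Fin.ext hv

end NCP

open Equiv

lemma orbit_rebase {α : Type*} (σ : Equiv.Perm α) {x y : α} (h : σ.SameCycle x y) :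
    {z | σ.SameCycle x z} = {z | σ.SameCycle y z} :=
  Set.ext fun _ => ⟨fun hz => h.symm.trans hz, fun hz => h.trans hz⟩

lemma orbit_count {n : ℕ} (σ : Equiv.Perm (Fin (n + 2))) (σ' : Equiv.Perm (Fin n))
    (e : Fin n → Fin (n + 2)) (he : Function.Injective e) (p q : Fin (n + 2))
    (hq : σ q = q) (hp : σ p ≠ p) (hpq : p ≠ q)
    (hpe : p ∉ Set.range e) (hqe : q ∉ Set.range e)
    (hcov : ∀ x, x = p ∨ x = q ∨ x ∈ Set.range e)
    (hstep : ∀ j, σ (e j) = e (σ' j) ∨ (σ (e j) = p ∧ σ p = e (σ' j))) :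
    (permCycles σ).ncard = (permCycles σ').ncard + 1 := by
  -- forward transport
  have fwd : ∀ (j : Fin n) (l : ℕ), σ.SameCycle (e j) (e ((σ' ^ l) j)) := by
    intro j l
    induction l with
    | zero => simp [Equiv.Perm.SameCycle.refl]
    | succ l ih =>
      refine ih.trans ?_
      have hx := hstep ((σ' ^ l) j)
      have hpow : (σ' ^ (l + 1)) j = σ' ((σ' ^ l) j) := by
        rw [pow_succ', Equiv.Perm.mul_apply]
      rw [hpow]
      rcases hx with h | ⟨h1, h2⟩
      · exact ⟨1, by rw [zpow_one, h]⟩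
      · refine ⟨2, ?_⟩
        have h2' : (σ ^ (2:ℤ)) (e ((σ' ^ l) j)) = σ (σ (e ((σ' ^ l) j))) := by
          rw [show (2:ℤ) = 1 + 1 from rfl, zpow_add, zpow_one, Equiv.Perm.mul_apply]
        rw [h2', h1, h2]
  -- q's orbit is a singleton
  have hqpow : ∀ l : ℕ, (σ ^ l) q = q := by
    intro l; induction l with
    | zero => rfl
    | succ l ih => rw [pow_succ]; simp [ih, hq]
  have hqorb : {y | σ.SameCycle q y} = {q} := by
    ext y
    simp only [Set.mem_setOf_eq, Set.mem_singleton_iff]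
    constructor
    · intro h
      obtain ⟨l, _, hl⟩ := h.exists_pow_eq'
      rw [hqpow l] at hl; exact hl.symm
    · intro h; rw [h]
  -- backward transport
  have bwd : ∀ (j : Fin n) (l : ℕ),
      (∃ i, (σ ^ l) (e j) = e ((σ' ^ i) j)) ∨
      ((σ ^ l) (e j) = p ∧ ∃ i, (σ ^ (l + 1)) (e j) = e ((σ' ^ i) j)) := by
    intro j l
    induction l with
    | zero => exact Or.inl ⟨0, rfl⟩
    | succ l ih =>
      rcases ih with ⟨i, hi⟩ | ⟨hpl, i, hi⟩
      · have hnext : (σ ^ (l + 1)) (e j) = σ (e ((σ' ^ i) j)) := by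
          rw [pow_succ', Equiv.Perm.mul_apply, hi]
        rcases hstep ((σ' ^ i) j) with h | ⟨h1, h2⟩
        · refine Or.inl ⟨i + 1, ?_⟩
          rw [hnext, h, pow_succ', Equiv.Perm.mul_apply]
        · refine Or.inr ⟨by rw [hnext, h1], ⟨i + 1, ?_⟩⟩
          rw [pow_succ' σ (l+1), Equiv.Perm.mul_apply, hnext, h1, h2,
            pow_succ', Equiv.Perm.mul_apply]
      · exact Or.inl ⟨i, hi⟩
  -- SameCycle correspondence
  have scc : ∀ j j' : Fin n, σ'.SameCycle j j' ↔ σ.SameCycle (e j) (e j') := by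
    intro j j'
    constructor
    · intro h
      obtain ⟨l, _, hl⟩ := h.exists_pow_eq'
      have := fwd j l
      rwa [hl] at this
    · intro h
      obtain ⟨l, _, hl⟩ := h.exists_pow_eq'
      rcases bwd j l with ⟨i, hi⟩ | ⟨hpl, _⟩
      · rw [hl] at hi
        have := he hi.symm
        exact ⟨(i : ℤ), by rw [zpow_natCast, this]⟩
      · have : e j' = p := by rw [← hl, hpl]
        exact absurd ⟨j', this⟩ hpe
  -- the singleton cycle
  have hqmem : ({q} : Set (Fin (n + 2))) ∈ permCycles σ := ⟨q, hqorb.symm⟩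
  set D := permCycles σ \ {({q} : Set (Fin (n + 2)))} with hD
  -- every cycle other than {q} contains a point of range e
  have hrep : ∀ O ∈ D, ∃ j : Fin n, e j ∈ O := by
    rintro O ⟨⟨x, rfl⟩, hOne⟩
    simp only [Set.mem_singleton_iff] at hOne
    rcases hcov x with rfl | rfl | ⟨j, rfl⟩
    · have hpq' : σ x ≠ q := fun h => hpq (σ.injective (h.trans hq.symm))
      rcases hcov (σ x) with h | h | ⟨j, hj⟩
      · exact absurd h hp
      · exact absurd h hpq'
      · exact ⟨j, show σ.SameCycle x (e j) from by rw [hj]; exact ⟨1, by rw [zpow_one]⟩⟩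
    · exact absurd hqorb hOne
    · exact ⟨j, Equiv.Perm.SameCycle.refl σ (e j)⟩
  have hpre : ∀ (j : Fin n), e ⁻¹' {y | σ.SameCycle (e j) y} = {j' | σ'.SameCycle j j'} := by
    intro j
    ext j'
    simp only [Set.mem_preimage, Set.mem_setOf_eq]
    exact (scc j j').symm
  have hbij : Set.BijOn (fun O => e ⁻¹' O) D (permCycles σ') := by
    refine ⟨?_, ?_, ?_⟩
    · rintro O hO
      obtain ⟨j, hj⟩ := hrep O hO
      obtain ⟨⟨x, rfl⟩, _⟩ := hO
      show e ⁻¹' {y | σ.SameCycle x y} ∈ permCycles σ'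
      rw [orbit_rebase σ (show σ.SameCycle x (e j) from hj), hpre j]
      exact ⟨j, rfl⟩
    · rintro O₁ hO₁ O₂ hO₂ heq
      obtain ⟨j, hj⟩ := hrep O₁ hO₁
      have heq' : e ⁻¹' O₁ = e ⁻¹' O₂ := heq
      have hj' : e j ∈ O₂ := by
        have : j ∈ e ⁻¹' O₁ := hj
        rw [heq'] at this
        exact this
      obtain ⟨⟨x₁, rfl⟩, _⟩ := hO₁
      obtain ⟨⟨x₂, rfl⟩, _⟩ := hO₂
      rw [orbit_rebase σ (show σ.SameCycle x₁ (e j) from hj),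
        orbit_rebase σ (show σ.SameCycle x₂ (e j) from hj')]
    · rintro c ⟨j, rfl⟩
      refine ⟨{y | σ.SameCycle (e j) y}, ⟨⟨e j, rfl⟩, ?_⟩, hpre j⟩
      simp only [Set.mem_singleton_iff]
      intro h
      have : σ.SameCycle (e j) (e j) := Equiv.Perm.SameCycle.refl σ (e j)
      have : e j ∈ ({q} : Set (Fin (n+2))) := h ▸ this
      exact hqe ⟨j, this⟩
  have hfin : D.Finite := Set.toFinite D
  have hins : permCycles σ = insert ({q} : Set (Fin (n+2))) D := by
    rw [hD, Set.insert_diff_singleton, Set.insert_eq_self.2 hqmem]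
  have hcard : (permCycles σ').ncard = D.ncard := by
    rw [← hbij.image_eq, Set.ncard_image_of_injOn hbij.injOn]
  rw [hins, Set.ncard_insert_of_notMem (by simp [hD]) hfin, hcard]

lemma finRotate_val {n : ℕ} (hn : 1 ≤ n) (z : Fin n) :
    ((finRotate n z : ℕ)) = ((z : ℕ) + 1) % n := by
  cases n with
  | zero => omega
  | succ m =>
    rw [finRotate_succ_apply, Fin.add_def, Fin.val_one']
    rw [Nat.add_mod ((z:ℕ)) 1, Nat.mod_eq_of_lt z.isLt]

lemma reduce {n : ℕ} (hn : 2 ≤ n) (π : Equiv.Perm (Fin (n + 2)))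
    (hπ : IsNCPairPartition π) :
    ∃ π' : Equiv.Perm (Fin n), IsNCPairPartition π' ∧
      (permCycles (finRotate (n + 2) * π)).ncard
        = (permCycles (finRotate n * π')).ncard + 1 := by
  obtain ⟨hfp, hinv, hncr⟩ := hπ
  obtain ⟨a, ha, hpair⟩ := ncp_adjacent ⟨hfp, hinv, hncr⟩ (by omega)
  set p : Fin (n + 2) := ⟨a, by omega⟩ with hpdef
  set q : Fin (n + 2) := ⟨a + 1, ha⟩ with hqdef
  have hπp : π p = q := hpair
  have hπq : π q = p := by rw [← hπp, hinv]
  have han : a ≤ n := by omega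
  set e : Fin n → Fin (n + 2) :=
    fun j => if (j : ℕ) < a then ⟨j, by omega⟩ else ⟨(j : ℕ) + 2, by omega⟩ with hedef
  have hev : ∀ j : Fin n, ((e j : ℕ) = (j : ℕ) ∧ (j : ℕ) < a)
      ∨ ((e j : ℕ) = (j : ℕ) + 2 ∧ a ≤ (j : ℕ)) := by
    intro j
    by_cases h : (j : ℕ) < a
    · left; exact ⟨by simp [hedef, h], h⟩
    · right; exact ⟨by simp [hedef, h], by omega⟩
  clear_value e
  clear hedef
  have he : Function.Injective e := by
    intro j j' h
    rcases hev j with ⟨h1, h2⟩ | ⟨h1, h2⟩ <;> rcases hev j' with ⟨h3, h4⟩ | ⟨h3, h4⟩ <;>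
      (apply Fin.ext; rw [Fin.ext_iff] at h; omega)
  have hpe : p ∉ Set.range e := by
    rintro ⟨j, hj⟩
    rcases hev j with ⟨h1, h2⟩ | ⟨h1, h2⟩ <;>
      (rw [Fin.ext_iff] at hj; simp [hpdef] at hj; omega)
  have hqe : q ∉ Set.range e := by
    rintro ⟨j, hj⟩
    rcases hev j with ⟨h1, h2⟩ | ⟨h1, h2⟩ <;>
      (rw [Fin.ext_iff] at hj; simp [hqdef] at hj; omega)
  have hpv : (p : ℕ) = a := rfl
  have hqv : (q : ℕ) = a + 1 := rfl
  clear_value p q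
  clear hpdef hqdef
  have hcov : ∀ x : Fin (n + 2), x = p ∨ x = q ∨ x ∈ Set.range e := by
    intro x
    rcases lt_trichotomy (x : ℕ) a with h | h | h
    · obtain ⟨j, hjv⟩ : ∃ j : Fin n, (j : ℕ) = (x : ℕ) := ⟨⟨(x : ℕ), by omega⟩, rfl⟩
      refine Or.inr (Or.inr ⟨j, ?_⟩)
      apply Fin.ext
      rcases hev j with ⟨h1, h2⟩ | ⟨h1, h2⟩ <;> omega
    · exact Or.inl (Fin.ext (by omega))
    · rcases Nat.eq_or_lt_of_le h with h' | h'
      · exact Or.inr (Or.inl (Fin.ext (by omega)))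
      · have hx2 := x.isLt
        obtain ⟨j, hjv⟩ : ∃ j : Fin n, (j : ℕ) = (x : ℕ) - 2 :=
          ⟨⟨(x : ℕ) - 2, by omega⟩, rfl⟩
        refine Or.inr (Or.inr ⟨j, ?_⟩)
        apply Fin.ext
        rcases hev j with ⟨h1, h2⟩ | ⟨h1, h2⟩ <;> omega
  -- the reduced involution
  have hπne : ∀ j : Fin n, (π (e j) : ℕ) ≠ a ∧ (π (e j) : ℕ) ≠ a + 1 := by
    intro j
    constructor
    · intro h
      have h1 : π (e j) = p := Fin.ext (by omega)
      have h3 := congrArg π h1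
      rw [hinv, hπp] at h3
      exact hqe ⟨j, h3⟩
    · intro h
      have h1 : π (e j) = q := Fin.ext (by omega)
      have h3 := congrArg π h1
      rw [hinv, hπq] at h3
      exact hpe ⟨j, h3⟩
  obtain ⟨f', hf'⟩ : ∃ f' : Fin n → Fin n, ∀ j,
      (f' j : ℕ) = if (π (e j) : ℕ) < a then (π (e j) : ℕ) else (π (e j) : ℕ) - 2 := by
    refine ⟨fun j => if h : (π (e j) : ℕ) < a then ⟨(π (e j) : ℕ), by omega⟩
      else ⟨(π (e j) : ℕ) - 2, by have := (π (e j)).isLt; omega⟩, fun j => ?_⟩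
    dsimp only
    by_cases h : (π (e j) : ℕ) < a
    · rw [dif_pos h, if_pos h]
    · rw [dif_neg h, if_neg h]
  have hef : ∀ j, e (f' j) = π (e j) := by
    intro j
    obtain ⟨hne1, hne2⟩ := hπne j
    have hlt := (π (e j)).isLt
    have hfv := hf' j
    apply Fin.ext
    by_cases h : (π (e j) : ℕ) < a
    · rw [if_pos h] at hfv
      rcases hev (f' j) with ⟨h1, h2⟩ | ⟨h1, h2⟩ <;> omega
    · rw [if_neg h] at hfv
      rcases hev (f' j) with ⟨h1, h2⟩ | ⟨h1, h2⟩ <;> omega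
  have hinvol : Function.Involutive f' := by
    intro j
    apply he
    rw [hef, hef, hinv]
  set π' : Equiv.Perm (Fin n) := hinvol.toPerm with hπ'def
  have hπ'app : ∀ r, π' r = f' r := fun r => rfl
  clear_value π'
  clear hπ'def
  have hπ'nc : IsNCPairPartition π' := by
    refine ⟨?_, ?_, ?_⟩
    · intro r h
      rw [hπ'app] at h
      have : e (f' r) = e r := by rw [h]
      rw [hef] at this
      exact hfp (e r) this
    · intro r; rw [hπ'app, hπ'app]; exact hinvol r
    · rintro ⟨b, c, d, f, h1, h2, h3, h4, h5⟩
      have hmono : ∀ j j' : Fin n, j < j' → e j < e j' := by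
        intro j j' h
        rcases hev j with ⟨hh1, hh2⟩ | ⟨hh1, hh2⟩ <;> rcases hev j' with ⟨hh3, hh4⟩ | ⟨hh3, hh4⟩ <;>
          (rw [Fin.lt_def] at h ⊢; omega)
      refine hncr ⟨e b, e c, e d, e f, hmono _ _ h1, hmono _ _ h2, hmono _ _ h3, ?_, ?_⟩
      · rw [← hef, ← h4, hπ'app]
      · rw [← hef, ← h5, hπ'app]
  refine ⟨π', hπ'nc, ?_⟩
  -- step compatibility for the rotations
  have hrot : ∀ x : Fin n, finRotate (n + 2) (e x) = e (finRotate n x) ∨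
      (finRotate (n + 2) (e x) = p ∧ finRotate (n + 2) q = e (finRotate n x)) := by
    intro x
    have hx2 := x.isLt
    have hv1 : ((finRotate (n + 2) (e x) : ℕ)) = ((e x : ℕ) + 1) % (n + 2) :=
      finRotate_val (by omega) _
    have hv2 : ((finRotate n x : ℕ)) = ((x : ℕ) + 1) % n := finRotate_val (by omega) _
    have hq1 : ((finRotate (n + 2) q : ℕ)) = (a + 1 + 1) % (n + 2) := by
      have h0 := finRotate_val (n := n + 2) (by omega) q
      rwa [hqv] at h0
    rcases hev x with ⟨h1, h2⟩ | ⟨h1, h2⟩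
    · rcases Nat.lt_trichotomy ((x : ℕ) + 1) a with h | h | h
      · have c1 : ((finRotate (n + 2) (e x) : ℕ)) = (x : ℕ) + 1 := by
          rw [hv1, h1, Nat.mod_eq_of_lt (by omega)]
        have c2 : ((finRotate n x : ℕ)) = (x : ℕ) + 1 := by
          rw [hv2, Nat.mod_eq_of_lt (by omega)]
        left
        apply Fin.ext
        rcases hev (finRotate n x) with ⟨h3, h4⟩ | ⟨h3, h4⟩ <;> omega
      · have c1 : ((finRotate (n + 2) (e x) : ℕ)) = (x : ℕ) + 1 := by
          rw [hv1, h1, Nat.mod_eq_of_lt (by omega)]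
        right
        refine ⟨Fin.ext (by omega), Fin.ext ?_⟩
        rcases Nat.lt_or_ge a n with han' | han'
        · have c2 : ((finRotate n x : ℕ)) = a := by
            rw [hv2, h, Nat.mod_eq_of_lt han']
          have c3 : ((finRotate (n + 2) q : ℕ)) = a + 1 + 1 := by
            rw [hq1, Nat.mod_eq_of_lt (by omega)]
          rcases hev (finRotate n x) with ⟨h3, h4⟩ | ⟨h3, h4⟩ <;> omega
        · have haa : a = n := by omega
          have c2 : ((finRotate n x : ℕ)) = 0 := by
            rw [hv2, h, haa, Nat.mod_self]
          have c3 : ((finRotate (n + 2) q : ℕ)) = 0 := by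
            rw [hq1]
            have hmod : a + 1 + 1 = n + 2 := by omega
            rw [hmod, Nat.mod_self]
          rcases hev (finRotate n x) with ⟨h3, h4⟩ | ⟨h3, h4⟩ <;> omega
      · omega
    · rcases Nat.lt_or_ge ((x : ℕ) + 2) (n + 1) with h | h
      · have c1 : ((finRotate (n + 2) (e x) : ℕ)) = (x : ℕ) + 3 := by
          rw [hv1, h1, Nat.mod_eq_of_lt (by omega)]
        have c2 : ((finRotate n x : ℕ)) = (x : ℕ) + 1 := by
          rw [hv2, Nat.mod_eq_of_lt (by omega)]
        left
        apply Fin.ext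
        rcases hev (finRotate n x) with ⟨h3, h4⟩ | ⟨h3, h4⟩ <;> omega
      · have hxn : (x : ℕ) + 1 = n := by omega
        have c1 : ((finRotate (n + 2) (e x) : ℕ)) = 0 := by
          rw [hv1, h1]
          have hmod : (x : ℕ) + 2 + 1 = n + 2 := by omega
          rw [hmod, Nat.mod_self]
        have c2 : ((finRotate n x : ℕ)) = 0 := by rw [hv2, hxn, Nat.mod_self]
        rcases Nat.eq_zero_or_pos a with ha0 | ha0
        · have c3 : ((finRotate (n + 2) q : ℕ)) = a + 1 + 1 := by
            rw [hq1, Nat.mod_eq_of_lt (by omega)]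
          right
          refine ⟨Fin.ext (by omega), Fin.ext ?_⟩
          rcases hev (finRotate n x) with ⟨h3, h4⟩ | ⟨h3, h4⟩ <;> omega
        · left
          apply Fin.ext
          rcases hev (finRotate n x) with ⟨h3, h4⟩ | ⟨h3, h4⟩ <;> omega
  -- apply the abstract counting lemma
  apply orbit_count (finRotate (n + 2) * π) (finRotate n * π') e he p q
  · -- σ q = q
    rw [Equiv.Perm.mul_apply, hπq]
    apply Fin.ext
    rw [finRotate_val (by omega) p, hpv, hqv]
    exact Nat.mod_eq_of_lt (by omega)
  · -- σ p ≠ p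
    rw [Equiv.Perm.mul_apply, hπp]
    intro hcon
    rw [Fin.ext_iff, finRotate_val (by omega) q, hqv, hpv] at hcon
    rcases Nat.lt_or_ge (a + 1 + 1) (n + 2) with h | h
    · rw [Nat.mod_eq_of_lt h] at hcon; omega
    · have hmod : a + 1 + 1 = n + 2 := by omega
      rw [hmod, Nat.mod_self] at hcon; omega
  · intro hcon
    rw [Fin.ext_iff] at hcon
    omega
  · exact hpe
  · exact hqe
  · exact hcov
  · intro j
    have h1 : (finRotate (n + 2) * π) (e j) = finRotate (n + 2) (e (f' j)) := by
      rw [Equiv.Perm.mul_apply, hef]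
    have h2 : (finRotate n * π') j = finRotate n (f' j) := by
      rw [Equiv.Perm.mul_apply, hπ'app]
    have h3 : (finRotate (n + 2) * π) p = finRotate (n + 2) q := by
      rw [Equiv.Perm.mul_apply, hπp]
    rw [h1, h2, h3]
    exact hrot (f' j)

lemma count_main : ∀ n : ℕ, 2 ≤ n → Even n → ∀ π : Equiv.Perm (Fin n),
    IsNCPairPartition π → (permCycles (finRotate n * π)).ncard = n / 2 + 1 := by
  intro n
  induction n using Nat.strong_induction_on with
  | _ n ih =>
    intro hn heven π hπ
    obtain ⟨c, hc⟩ := heven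
    rcases eq_or_lt_of_le hn with h2 | h4
    · -- base case n = 2
      subst h2
      have hσ1 : (finRotate 2 * π) = 1 := by
        apply Equiv.ext
        intro x
        have h1 := hπ.1 x
        rw [Fin.ne_iff_vne] at h1
        have h2 := (π x).isLt
        have h3 := x.isLt
        apply Fin.ext
        rw [Equiv.Perm.mul_apply, finRotate_val (by omega)]
        show ((π x : ℕ) + 1) % 2 = (x : ℕ)
        omega
      rw [hσ1]
      have hpc : permCycles (1 : Equiv.Perm (Fin 2))
          = Set.range (fun x : Fin 2 => ({x} : Set (Fin 2))) := by
        ext cset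
        constructor
        · rintro ⟨x, rfl⟩
          exact ⟨x, by ext y; simp [Equiv.Perm.sameCycle_one, eq_comm]⟩
        · rintro ⟨x, rfl⟩
          exact ⟨x, by ext y; simp [Equiv.Perm.sameCycle_one, eq_comm]⟩
      rw [hpc, ← Set.image_univ,
        Set.ncard_image_of_injOn (fun x _ y _ h => Set.singleton_eq_singleton_iff.1 h),
        Set.ncard_univ]
      simp [Nat.card_eq_fintype_card]
    · obtain ⟨m, rfl⟩ : ∃ m, n = m + 2 := ⟨n - 2, by omega⟩
      have hm2 : 2 ≤ m := by omega
      obtain ⟨π', hnc', hcount⟩ := reduce hm2 π hπ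
      rw [hcount, ih m (by omega) (by omega) ⟨c - 1, by omega⟩ π' hnc']
      omega

lemma parity_main (n : ℕ) (hn : 2 ≤ n) (heven : Even n) (π : Equiv.Perm (Fin n))
    (hπ : IsNCPairPartition π) :
    ∀ x y : Fin n, (finRotate n * π).SameCycle x y → (x : ℕ) % 2 = (y : ℕ) % 2 := by
  obtain ⟨c, hc⟩ := heven
  have hpres : ∀ x : Fin n, (((finRotate n * π) x : ℕ)) % 2 = (x : ℕ) % 2 := by
    intro x
    have h1 := ncp_parity hπ x
    have h2 := (π x).isLt
    have h3 := x.isLt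
    rw [Equiv.Perm.mul_apply, finRotate_val (by omega)]
    have : (π x : ℕ) + 1 < n ∨ (π x : ℕ) + 1 = n := by omega
    rcases this with h | h
    · rw [Nat.mod_eq_of_lt h]; omega
    · rw [h, Nat.mod_self]; omega
  have hpow : ∀ (l : ℕ) (x : Fin n),
      ((((finRotate n * π) ^ l) x : ℕ)) % 2 = (x : ℕ) % 2 := by
    intro l
    induction l with
    | zero => intro x; rfl
    | succ l ihl =>
      intro x
      rw [pow_succ, Equiv.Perm.mul_apply, ihl ((finRotate n * π) x), hpres x]
  intro x y h
  obtain ⟨l, _, hl⟩ := h.exists_pow_eq'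
  rw [← hl]
  exact (hpow l x).symm

theorem stmt15 (k : ℕ) (hk : 1 ≤ k)
    (π : Equiv.Perm (Fin (2 * k))) (hπ : IsNCPairPartition π) :
    (permCycles (finRotate (2 * k) * π)).ncard = k + 1 ∧
    ∀ x y : Fin (2 * k), (finRotate (2 * k) * π).SameCycle x y →
      (x : ℕ) % 2 = (y : ℕ) % 2 := by
  constructor
  · rw [count_main (2 * k) (by omega) ⟨k, by omega⟩ π hπ]
    omega
  · exact parity_main (2 * k) (by omega) ⟨k, by omega⟩ π hπ
end
end

section
/- Let k ≥ 1 and 0 ≤ m ≤ k−1, and let γ be the cyclic permutation of {1,…,2k} given by γ(r) = r+1 for r < 2k and γ(2k) = 1. Then the number of non-crossing pair partitions π of {1,…,2k} such that γ∘π has exactly m+1 cycles consisting entirely of odd numbers equals the number of non-crossing partitions of {1,…,k} having exactly k−m blocks. -/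
noncomputable section

/-- A non-crossing set partition of `Fin k`, encoded as its finset of blocks. -/
def IsNCPartition {k : ℕ} (P : Finset (Finset (Fin k))) : Prop :=
  (∀ V ∈ P, V.Nonempty) ∧
  (∀ x : Fin k, ∃! V : Finset (Fin k), V ∈ P ∧ x ∈ V) ∧
  ¬ ∃ a b c d : Fin k, a < b ∧ b < c ∧ c < d ∧
      ∃ V ∈ P, ∃ W ∈ P, V ≠ W ∧ a ∈ V ∧ c ∈ V ∧ b ∈ W ∧ d ∈ W

open Classical in
/-- The finset of all non-crossing partitions of `{1, …, k}` (as `Fin k`). -/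
def NCset (k : ℕ) : Finset (Finset (Finset (Fin k))) :=
  Finset.univ.filter IsNCPartition

open Classical in
/-- The finset of all non-crossing pair partitions of `{1, …, m}` (as `Fin m`). -/
def NC2 (m : ℕ) : Finset (Equiv.Perm (Fin m)) :=
  Finset.univ.filter IsNCPairPartition

/-!
Write `γ = finRotate (2k)` and call `2i` and `2i+1` the left and right points of `i : Fin k`.
A permutation `g` of `Fin k` fattens to the pairing `π` joining `2i+1` to `2 g(i)`, and then
`γ π` sends `2i+1` to `2 g(i) + 1`. Take for `g` the map sending each point to the next point of
its block in cyclic order: its cycles are the blocks, each traversed in increasing cyclic order,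
and the fattened pairing is non-crossing exactly when the partition is. Conversely, for a
non-crossing pairing `π` every cycle of `γ π` is traversed in increasing cyclic order, since the
arc from `x` to `γ π x` is mapped into itself; so `π` is the fattening of such a `g`, whose
blocks are the cycles of `γ π` through right points. A cycle traversed in increasing cyclic
order has exactly one descent `γ π x ≤ x`, and `γ π` has `k + 1` descents (one for each pair
and one where `γ` wraps around), so the cycles through left points number `k + 1` minus the
number of blocks.
-/

namespace NonCrossing

open Finset Equiv Equiv.Perm

/-- `x` lies strictly inside the arc running cyclically upward from `a` to `b`; for `b = a` the
arc is everything except `a`. -/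
def CycBtw {α : Type*} [LinearOrder α] (a b x : α) : Prop :=
  a < x ∧ x < b ∨ b ≤ a ∧ (a < x ∨ x < b)

theorem _root_.StrictMono.cycBtw_iff {α β : Type*} [LinearOrder α] [LinearOrder β]
    {f : α → β} (hf : StrictMono f) {a b x : α} :
    CycBtw (f a) (f b) (f x) ↔ CycBtw a b x := by
  simp only [CycBtw, hf.lt_iff_lt, hf.le_iff_le]

theorem val_finRotate {n : ℕ} (x : Fin n) :
    (finRotate n x : ℕ) = if (x : ℕ) + 1 = n then 0 else (x : ℕ) + 1 := by
  obtain ⟨m, rfl⟩ : ∃ m, n = m + 1 := ⟨n - 1, by have := x.isLt; omega⟩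
  rw [coe_finRotate]
  simp only [Fin.ext_iff, Fin.val_last, Nat.add_right_cancel_iff]

section CyclicOrder

variable {n : ℕ} {a b c x y : Fin n}

theorem CycBtw.ne_left (h : CycBtw a b x) : x ≠ a := by
  unfold CycBtw at h; omega

theorem CycBtw.ne_right (h : CycBtw a b x) : x ≠ b := by
  unfold CycBtw at h; omega

theorem cycBtw_or_cycBtw_of_ne (h : b ≠ c) : CycBtw a b c ∨ CycBtw a c b := by
  unfold CycBtw; omega

theorem cycBtw_or_cycBtw_of_ne_left (h : a ≠ c) : CycBtw a b c ∨ CycBtw c b a := by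
  unfold CycBtw; omega

/-- `R` and `S` are two families of chords, no chord of one crossing a chord of the other. -/
theorem cycBtw_of_not_crossing {R S : Fin n → Fin n → Prop}
    (hR : ∀ a b, R a b → R b a) (hS : ∀ a b, S a b → S b a)
    (hRS : ∀ a b c d, a < b → b < c → c < d → R a c → S b d → False)
    (hSR : ∀ a b c d, a < b → b < c → c < d → S a c → R b d → False) {u v : Fin n}
    (huv : R u v) (hxy : S x y) (hyu : y ≠ u) (hyv : y ≠ v) (hx : CycBtw u v x) :
    CycBtw u v y := by
  by_contra hy
  unfold CycBtw at hx hy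
  obtain ⟨h₁, h₂, h₃⟩ | ⟨h₁, h₂, h₃⟩ | ⟨h₁, h₂, h₃⟩ | ⟨h₁, h₂, h₃⟩ :
      u < x ∧ x < v ∧ v < y ∨ y < u ∧ u < x ∧ x < v ∨ v < y ∧ y < u ∧ u < x ∨
        x < v ∧ v < y ∧ y < u := by
    omega
  · exact hRS u x v y h₁ h₂ h₃ huv hxy
  · exact hSR y u x v h₁ h₂ h₃ (hS _ _ hxy) huv
  · exact hRS v y u x h₁ h₂ h₃ (hR _ _ huv) (hS _ _ hxy)
  · exact hSR x v y u h₁ h₂ h₃ hxy (hR _ _ huv)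

theorem cycBtw_finRotate (hab : a ≠ b) (h : CycBtw a b x) :
    CycBtw a (finRotate n b) (finRotate n x) := by
  have hb := val_finRotate b
  have hx := val_finRotate x
  unfold CycBtw at *
  split_ifs at hb hx <;> omega

theorem cycBtw_finRotate_self (hab : a ≠ b) : CycBtw a (finRotate n b) (finRotate n a) := by
  have ha := val_finRotate a
  have hb := val_finRotate b
  unfold CycBtw
  split_ifs at ha hb <;> omega

theorem cycBtw_or_eq_of_cycBtw_finRotate (h : CycBtw a (finRotate n b) x) :
    CycBtw a b x ∨ x = b := by
  have hb := val_finRotate b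
  unfold CycBtw at *
  split_ifs at hb <;> omega

end CyclicOrder

section Cycles

variable {α : Type*} [Finite α] {f : Perm α} {x y : α}

theorem _root_.Equiv.Perm.SameCycle.mem_of_mapsTo {s : Set α} (hs : Set.MapsTo f s s)
    (h : f.SameCycle x y) (hx : x ∈ s) : y ∈ s := by
  obtain ⟨m, rfl⟩ := h.exists_nat_pow_eq
  exact (hs.perm_pow m) hx

theorem sameCycle_iff_of_semiconj {β : Type*} [Finite β] {σ : Perm β} {e : α → β}
    (he : Function.Injective e) (h : ∀ a, σ (e a) = e (f a)) :
    σ.SameCycle (e x) (e y) ↔ f.SameCycle x y := by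
  have hpow : ∀ m : ℕ, ∀ a, (σ ^ m) (e a) = e ((f ^ m) a) := by
    intro m
    induction m with
    | zero => simp
    | succ m ih => simp [pow_succ', ih, h]
  constructor
  · intro hxy
    obtain ⟨m, hm⟩ := hxy.exists_nat_pow_eq
    exact ⟨m, he (by rw [zpow_natCast, ← hpow, hm])⟩
  · intro hxy
    obtain ⟨m, rfl⟩ := hxy.exists_nat_pow_eq
    exact ⟨m, by rw [zpow_natCast, hpow]⟩

end Cycles

section CyclicallyIncreasing

variable {n : ℕ} {f : Perm (Fin n)} {x y : Fin n}

def IsCyclicallyIncreasing (f : Perm (Fin n)) : Prop :=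
  ∀ x y, f.SameCycle x y → ¬ CycBtw x (f x) y

theorem mem_filter_sameCycle_self (f : Perm (Fin n)) (x : Fin n) :
    x ∈ univ.filter (f.SameCycle x) :=
  mem_filter.2 ⟨mem_univ _, .refl _ _⟩

theorem apply_mem_filter_sameCycle (f : Perm (Fin n)) (x : Fin n) :
    f x ∈ univ.filter (f.SameCycle x) :=
  mem_filter.2 ⟨mem_univ _, sameCycle_apply_right.2 (.refl _ _)⟩

theorem isCyclicallyIncreasing_of_cycBtw
    (h : ∀ x y, CycBtw x (f x) y → CycBtw x (f x) (f y)) : IsCyclicallyIncreasing f :=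
  fun x _ hxy hy =>
    (hxy.symm.mem_of_mapsTo (s := {z | CycBtw x (f x) z}) (fun _ hz => h x _ hz) hy).ne_left rfl

theorem exists_sameCycle_apply_le (f : Perm (Fin n)) (x : Fin n) :
    ∃ y, f.SameCycle x y ∧ f y ≤ y := by
  let s := univ.filter (f.SameCycle x)
  have hs : s.Nonempty := ⟨x, mem_filter_sameCycle_self f x⟩
  have hy : f.SameCycle x (s.max' hs) := (mem_filter.1 (s.max'_mem hs)).2
  exact ⟨s.max' hs, hy, s.le_max' _ (by simpa [s] using hy)⟩

theorem exists_sameCycle_cycBtw (h : ¬ f.SameCycle x y) :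
    ∃ z, f.SameCycle x z ∧ CycBtw z (f z) y := by
  let s := univ.filter (f.SameCycle x)
  have hfs : ∀ z ∈ s, f z ∈ s := by simp [s]
  have hys : ∀ z ∈ s, z ≠ y := by
    rintro z hz rfl
    exact h (mem_filter.1 hz).2
  by_cases hbelow : (s.filter (· < y)).Nonempty
  · -- the last point of the cycle below `y`
    set z := (s.filter (· < y)).max' hbelow
    obtain ⟨hz, hzy⟩ := mem_filter.1 ((s.filter (· < y)).max'_mem hbelow)
    refine ⟨z, (mem_filter.1 hz).2, ?_⟩
    have hmax : ¬ (f z < y ∧ z < f z) := fun h' =>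
      (((s.filter (· < y)).le_max' (f z) (mem_filter.2 ⟨hfs z hz, h'.1⟩)).not_gt h'.2)
    have := hys (f z) (hfs z hz)
    unfold CycBtw
    omega
  · -- the whole cycle lies above `y`: its maximum wraps around over `y`
    have hs : s.Nonempty := ⟨x, mem_filter_sameCycle_self f x⟩
    set z := s.max' hs
    have hz := s.max'_mem hs
    refine ⟨z, (mem_filter.1 hz).2, ?_⟩
    have h₁ : f z ≤ z := s.le_max' _ (hfs z hz)
    have h₂ : ¬ f z < y := fun hlt => hbelow ⟨f z, mem_filter.2 ⟨hfs z hz, hlt⟩⟩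
    have := hys (f z) (hfs z hz)
    unfold CycBtw
    omega

theorem IsCyclicallyIncreasing.eq_of_sameCycle (hf : IsCyclicallyIncreasing f)
    (h : f.SameCycle x y) (hx : f x ≤ x) (hy : f y ≤ y) : x = y := by
  have h₁ := hf x y h
  have h₂ := hf y x h.symm
  unfold CycBtw at h₁ h₂
  omega

theorem IsCyclicallyIncreasing.exists_le_lt_lt_le (hf : IsCyclicallyIncreasing f) {a b c : Fin n}
    (hac : f.SameCycle a c) (hab : ¬ f.SameCycle a b) (h₁ : a < b) (h₂ : b < c) :
    ∃ x, f.SameCycle a x ∧ a ≤ x ∧ x < b ∧ b < f x ∧ f x ≤ c := by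
  obtain ⟨x, hax, hx⟩ := exists_sameCycle_cycBtw hab
  have ha := hf x a hax.symm
  have hc := hf x c (hax.symm.trans hac)
  refine ⟨x, hax, ?_⟩
  unfold CycBtw at hx ha hc
  omega

theorem IsCyclicallyIncreasing.card_image_eq_card_filter_apply_le
    (hf : IsCyclicallyIncreasing f) {β : Type*} [DecidableEq β] (c : Fin n → β)
    (hc : ∀ x y, c x = c y ↔ f.SameCycle x y) {s : Finset (Fin n)}
    (hs : ∀ x ∈ s, ∀ y, f.SameCycle x y → y ∈ s) :
    #(s.image c) = #(s.filter fun x => f x ≤ x) := by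
  have himage : s.image c = (s.filter fun x => f x ≤ x).image c := by
    refine Subset.antisymm (fun b hb => ?_) (image_subset_image (filter_subset _ _))
    obtain ⟨x, hx, rfl⟩ := mem_image.1 hb
    obtain ⟨y, hxy, hy⟩ := exists_sameCycle_apply_le f x
    exact mem_image.2 ⟨y, mem_filter.2 ⟨hs x hx y hxy, hy⟩, (hc y x).2 hxy.symm⟩
  rw [himage, card_image_of_injOn]
  intro x hx y hy hxy
  exact hf.eq_of_sameCycle ((hc x y).1 hxy) (mem_filter.1 hx).2 (mem_filter.1 hy).2

theorem IsCyclicallyIncreasing.ncard_permCycles (hf : IsCyclicallyIncreasing f)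
    (p : Fin n → Prop) [DecidablePred p] (hp : ∀ x, p (f x) ↔ p x) :
    {c | c ∈ permCycles f ∧ ∀ y ∈ c, p y}.ncard = #{x | p x ∧ f x ≤ x} := by
  classical
  have hinv : ∀ x y, f.SameCycle x y → p x → p y := fun x y hxy hx =>
    hxy.mem_of_mapsTo (s := {z | p z}) (fun z hz => (hp z).2 hz) hx
  have hset : {c | c ∈ permCycles f ∧ ∀ y ∈ c, p y} =
      ↑((univ.filter p).image fun x => {y | f.SameCycle x y}) := by
    ext c
    simp only [permCycles, Set.mem_ofPred_eq, coe_image, coe_filter, mem_univ, true_and,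
      Set.mem_image]
    constructor
    · rintro ⟨⟨x, rfl⟩, hall⟩
      exact ⟨x, hall x (SameCycle.refl _ _), rfl⟩
    · rintro ⟨x, hx, rfl⟩
      exact ⟨⟨x, rfl⟩, fun y hy => hinv x y hy hx⟩
  rw [hset, Set.ncard_coe_finset, hf.card_image_eq_card_filter_apply_le, filter_filter]
  · intro x y
    refine ⟨fun h => ?_, fun h => Set.ext fun z => ⟨h.symm.trans, h.trans⟩⟩
    have hy : y ∈ {z | f.SameCycle y z} := SameCycle.refl _ _
    rwa [← h] at hy
  · exact fun x hx y hxy => mem_filter.2 ⟨mem_univ _, hinv x y hxy (mem_filter.1 hx).2⟩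

end CyclicallyIncreasing

theorem two_mul_card_filter_apply_lt {α : Type*} [LinearOrder α] {σ : α → α}
    (hinv : ∀ x, σ (σ x) = x) (hfix : ∀ x, σ x ≠ x) {s : Finset α}
    (hs : ∀ x ∈ s, σ x ∈ s) : 2 * #(s.filter fun x => σ x < x) = #s := by
  have hswap : #(s.filter fun x => σ x < x) = #(s.filter fun x => ¬ σ x < x) := by
    refine card_nbij' σ σ (fun x hx => ?_) (fun x hx => ?_) (fun x _ => hinv x)
      (fun x _ => hinv x)
    · simp only [coe_filter, Set.mem_ofPred_eq] at hx ⊢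
      exact ⟨hs x hx.1, by rw [hinv]; exact hx.2.le.not_gt⟩
    · simp only [coe_filter, Set.mem_ofPred_eq] at hx ⊢
      exact ⟨hs x hx.1, by rw [hinv]; exact lt_of_le_of_ne (not_lt.1 hx.2) (hfix x).symm⟩
  have := card_filter_add_card_filter_not (s := s) (fun x => σ x < x)
  omega

section PairPartition

variable {n : ℕ} {π : Perm (Fin n)}

theorem _root_.IsNCPairPartition.cycBtw_apply (hπ : IsNCPairPartition π) {x y : Fin n}
    (h : CycBtw x (π x) y) : CycBtw x (π x) (π y) := by
  have hcross : ∀ a b c d, a < b → b < c → c < d → π a = c → π b = d → False :=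
    fun a b c d h₁ h₂ h₃ hac hbd => hπ.2.2 ⟨a, b, c, d, h₁, h₂, h₃, hac, hbd⟩
  have hsymm : ∀ a b, π a = b → π b = a := fun a _ hab => hab ▸ hπ.2.1 a
  refine cycBtw_of_not_crossing hsymm hsymm hcross hcross rfl rfl (fun hyx => h.ne_right ?_)
    (fun hyx => h.ne_left (π.injective hyx)) h
  rw [← hyx, hπ.2.1]

theorem _root_.IsNCPairPartition.val_apply_mod_two_ne (hπ : IsNCPairPartition π) (x : Fin n) :
    (π x : ℕ) % 2 ≠ x % 2 := by
  suffices h : ∀ x, x < π x → (π x : ℕ) % 2 ≠ x % 2 by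
    rcases lt_or_gt_of_ne (hπ.1 x) with hlt | hlt
    · have := h (π x) (by rwa [hπ.2.1])
      rw [hπ.2.1] at this
      omega
    · exact h x hlt
  intro x hx
  -- the chords starting inside `(x, π x)` stay inside, so this interval has even length
  have hI : ∀ y ∈ Ioo x (π x), π y ∈ Ioo x (π x) := by
    intro y hy
    rw [mem_Ioo] at hy ⊢
    have := hπ.cycBtw_apply (x := x) (y := y) (by unfold CycBtw; omega)
    unfold CycBtw at this
    omega
  have := two_mul_card_filter_apply_lt hπ.2.1 hπ.1 hI
  rw [Fin.card_Ioo] at this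
  omega

theorem _root_.IsNCPairPartition.isCyclicallyIncreasing (hπ : IsNCPairPartition π) :
    IsCyclicallyIncreasing (finRotate n * π) := by
  refine isCyclicallyIncreasing_of_cycBtw fun y w h => ?_
  simp only [Perm.mul_apply] at h ⊢
  rcases cycBtw_or_eq_of_cycBtw_finRotate h with h | rfl
  · exact cycBtw_finRotate (hπ.1 y).symm (hπ.cycBtw_apply h)
  · rw [hπ.2.1]
    exact cycBtw_finRotate_self (hπ.1 y).symm

variable {k : ℕ} {π : Perm (Fin (2 * k))}

theorem _root_.IsNCPairPartition.val_finRotate_mul_mod_two (hπ : IsNCPairPartition π)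
    (x : Fin (2 * k)) : ((finRotate (2 * k) * π) x : ℕ) % 2 = x % 2 := by
  have h₁ := hπ.val_apply_mod_two_ne x
  have h₂ := val_finRotate (π x)
  rw [Perm.mul_apply]
  split_ifs at h₂ <;> omega

theorem _root_.IsNCPairPartition.card_filter_finRotate_mul_le (hπ : IsNCPairPartition π)
    (hk : 1 ≤ k) : #{x | (finRotate (2 * k) * π) x ≤ x} = k + 1 := by
  let last : Fin (2 * k) := ⟨2 * k - 1, by omega⟩
  have hlast : (last : ℕ) = 2 * k - 1 := rfl
  -- `γ π x ≤ x` happens when `π x < x`, and once more when `π x` is the last point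
  have hdesc : univ.filter (fun x => (finRotate (2 * k) * π) x ≤ x) =
      insert (π last) (univ.filter fun x => π x < x) := by
    ext x
    have hx : x = π last ↔ π x = last :=
      ⟨fun h => h ▸ hπ.2.1 last, fun h => h ▸ (hπ.2.1 x).symm⟩
    have := val_finRotate (π x)
    simp only [mem_filter, mem_univ, true_and, mem_insert, Perm.mul_apply, hx, Fin.ext_iff,
      Fin.le_def, Fin.lt_def]
    split_ifs at this <;> omega
  have hnotMem : π last ∉ univ.filter fun x => π x < x := by
    simp only [mem_filter, mem_univ, true_and, hπ.2.1, not_lt, Fin.le_def]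
    omega
  have := two_mul_card_filter_apply_lt hπ.2.1 hπ.1 (s := univ) (fun _ _ => mem_univ _)
  rw [hdesc, card_insert_of_notMem hnotMem]
  simp only [card_univ, Fintype.card_fin] at this
  omega

end PairPartition

section Partition

variable {n : ℕ}

def cycSucc (s : Finset (Fin n)) (x : Fin n) : Fin n :=
  if h : (s.filter (x < ·)).Nonempty then (s.filter (x < ·)).min' h
  else if h' : s.Nonempty then s.min' h' else x

variable {s : Finset (Fin n)} {x y : Fin n}

theorem cycSucc_mem (hs : s.Nonempty) : cycSucc s x ∈ s := by
  unfold cycSucc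
  split_ifs with h
  · exact (mem_filter.1 (min'_mem _ h)).1
  · exact min'_mem _ hs

theorem not_cycBtw_cycSucc (hy : y ∈ s) : ¬ CycBtw x (cycSucc s x) y := by
  unfold cycSucc
  split_ifs with h h'
  · have h₁ : x < (s.filter (x < ·)).min' h := (mem_filter.1 (min'_mem _ h)).2
    have h₂ : x < y → (s.filter (x < ·)).min' h ≤ y := fun hxy =>
      min'_le _ _ (mem_filter.2 ⟨hy, hxy⟩)
    unfold CycBtw
    omega
  · have h₁ : ¬ x < y := fun hxy => h ⟨y, mem_filter.2 ⟨hy, hxy⟩⟩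
    have h₂ := s.min'_le y hy
    unfold CycBtw
    omega
  · exact absurd ⟨y, hy⟩ h'

theorem cycSucc_eq_of_forall_not_cycBtw (hy : y ∈ s) (h : ∀ z ∈ s, ¬ CycBtw x y z) :
    cycSucc s x = y := by
  by_contra hne
  rcases cycBtw_or_cycBtw_of_ne (a := x) hne with h' | h'
  · exact not_cycBtw_cycSucc hy h'
  · exact h _ (cycSucc_mem ⟨y, hy⟩) h'

theorem cycSucc_injOn : Set.InjOn (cycSucc s) s := by
  intro x hx x' hx' h
  by_contra hne
  rcases cycBtw_or_cycBtw_of_ne_left (b := cycSucc s x) hne with h' | h'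
  · exact not_cycBtw_cycSucc hx' h'
  · exact not_cycBtw_cycSucc hx (h ▸ h')

def IsPartition (P : Finset (Finset (Fin n))) : Prop :=
  (∀ V ∈ P, V.Nonempty) ∧ ∀ x, ∃! V, V ∈ P ∧ x ∈ V

theorem _root_.IsNCPartition.isPartition {P : Finset (Finset (Fin n))} (hP : IsNCPartition P) :
    IsPartition P :=
  ⟨hP.1, hP.2.1⟩

open Classical in
def block (P : Finset (Finset (Fin n))) (x : Fin n) : Finset (Fin n) :=
  univ.filter fun y => ∃ V ∈ P, x ∈ V ∧ y ∈ V

variable {P : Finset (Finset (Fin n))} {V : Finset (Fin n)}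

theorem IsPartition.block_eq (hP : IsPartition P) (hV : V ∈ P) (hx : x ∈ V) :
    block P x = V := by
  obtain ⟨W, -, hW⟩ := hP.2 x
  ext y
  simp only [block, mem_filter, mem_univ, true_and]
  refine ⟨fun ⟨U, hU, hxU, hyU⟩ => ?_, fun hy => ⟨V, hV, hx, hy⟩⟩
  rwa [hW U ⟨hU, hxU⟩, ← hW V ⟨hV, hx⟩] at hyU

theorem IsPartition.block_mem (hP : IsPartition P) (x : Fin n) : block P x ∈ P := by
  obtain ⟨W, ⟨hW, hxW⟩, -⟩ := hP.2 x
  rwa [hP.block_eq hW hxW]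

theorem IsPartition.mem_block_self (hP : IsPartition P) (x : Fin n) : x ∈ block P x := by
  obtain ⟨W, ⟨hW, hxW⟩, -⟩ := hP.2 x
  rwa [hP.block_eq hW hxW]

theorem IsPartition.block_eq_block (hP : IsPartition P) (h : y ∈ block P x) :
    block P y = block P x :=
  hP.block_eq (hP.block_mem x) h

theorem IsPartition.cycSucc_block_mem (hP : IsPartition P) (x : Fin n) :
    cycSucc (block P x) x ∈ block P x :=
  cycSucc_mem ⟨x, hP.mem_block_self x⟩

theorem IsPartition.injective_cycSucc_block (hP : IsPartition P) :
    Function.Injective fun x => cycSucc (block P x) x := by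
  intro x x' h
  have hx := hP.cycSucc_block_mem x
  have hx' := hP.cycSucc_block_mem x'
  simp only at h
  rw [← h] at hx'
  have hb : block P x' = block P x := (hP.block_eq_block hx').symm.trans (hP.block_eq_block hx)
  rw [hb] at h
  exact cycSucc_injOn (hP.mem_block_self x) (hb ▸ hP.mem_block_self x') h

def blockRotation (hP : IsPartition P) : Perm (Fin n) :=
  Equiv.ofBijective _ (Finite.injective_iff_bijective.1 hP.injective_cycSucc_block)

theorem blockRotation_apply (hP : IsPartition P) (x : Fin n) :
    blockRotation hP x = cycSucc (block P x) x :=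
  rfl

theorem sameCycle_blockRotation_iff (hP : IsPartition P) :
    (blockRotation hP).SameCycle x y ↔ y ∈ block P x := by
  have hmaps : Set.MapsTo (blockRotation hP) (block P x : Set (Fin n)) (block P x) :=
    fun z hz => by
      rw [mem_coe, ← hP.block_eq_block hz]
      exact hP.cycSucc_block_mem z
  refine ⟨fun h => h.mem_of_mapsTo hmaps (hP.mem_block_self x), fun hy => ?_⟩
  by_contra h
  obtain ⟨z, hxz, hz⟩ := exists_sameCycle_cycBtw h
  have hzx : block P z = block P x :=
    hP.block_eq_block (hxz.mem_of_mapsTo hmaps (hP.mem_block_self x))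
  exact not_cycBtw_cycSucc (by rwa [hzx]) hz

theorem isCyclicallyIncreasing_blockRotation (hP : IsPartition P) :
    IsCyclicallyIncreasing (blockRotation hP) :=
  fun _ _ h => not_cycBtw_cycSucc ((sameCycle_blockRotation_iff hP).1 h)

def orbitPartition (g : Perm (Fin n)) : Finset (Finset (Fin n)) :=
  univ.image fun x => univ.filter (g.SameCycle x)

variable {g : Perm (Fin n)}

theorem filter_sameCycle_mem_orbitPartition (g : Perm (Fin n)) (x : Fin n) :
    univ.filter (g.SameCycle x) ∈ orbitPartition g :=
  mem_image_of_mem _ (mem_univ x)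

theorem filter_sameCycle_eq_iff :
    univ.filter (g.SameCycle x) = univ.filter (g.SameCycle y) ↔ g.SameCycle x y := by
  refine ⟨fun h => ?_, fun h => ?_⟩
  · have hy := mem_filter_sameCycle_self g y
    rw [← h] at hy
    exact (mem_filter.1 hy).2
  · ext z
    simp only [mem_filter, mem_univ, true_and]
    exact ⟨h.symm.trans, h.trans⟩

theorem isPartition_orbitPartition (g : Perm (Fin n)) : IsPartition (orbitPartition g) := by
  refine ⟨?_, fun x => ⟨univ.filter (g.SameCycle x),
    ⟨filter_sameCycle_mem_orbitPartition g x, mem_filter_sameCycle_self g x⟩, ?_⟩⟩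
  · simp only [orbitPartition, mem_image, mem_univ, true_and, forall_exists_index,
      forall_apply_eq_imp_iff]
    exact fun x => ⟨x, mem_filter_sameCycle_self g x⟩
  · rintro V ⟨hV, hxV⟩
    obtain ⟨y, -, rfl⟩ := mem_image.1 hV
    exact filter_sameCycle_eq_iff.2 (mem_filter.1 hxV).2

theorem block_orbitPartition (g : Perm (Fin n)) (x : Fin n) :
    block (orbitPartition g) x = univ.filter (g.SameCycle x) :=
  (isPartition_orbitPartition g).block_eq (filter_sameCycle_mem_orbitPartition g x)
    (mem_filter_sameCycle_self g x)

theorem orbitPartition_blockRotation (hP : IsPartition P) :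
    orbitPartition (blockRotation hP) = P := by
  have hblock : ∀ x, univ.filter ((blockRotation hP).SameCycle x) = block P x := fun x => by
    ext y
    simp [sameCycle_blockRotation_iff]
  ext V
  simp only [orbitPartition, mem_image, mem_univ, true_and, hblock]
  refine ⟨?_, fun hV => ?_⟩
  · rintro ⟨x, rfl⟩
    exact hP.block_mem x
  · obtain ⟨x, hx⟩ := hP.1 V hV
    exact ⟨x, hP.block_eq hV hx⟩

theorem blockRotation_eq_of_eq_orbitPartition (hP : IsPartition P)
    (hg : IsCyclicallyIncreasing g) (h : P = orbitPartition g) : blockRotation hP = g := by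
  subst h
  refine Equiv.ext fun x => ?_
  rw [blockRotation_apply, block_orbitPartition]
  exact cycSucc_eq_of_forall_not_cycBtw (apply_mem_filter_sameCycle g x)
    fun z hz => hg x z (mem_filter.1 hz).2

theorem IsCyclicallyIncreasing.card_orbitPartition (hg : IsCyclicallyIncreasing g) :
    #(orbitPartition g) = #{x | g x ≤ x} :=
  hg.card_image_eq_card_filter_apply_le _ (fun _ _ => filter_sameCycle_eq_iff)
    fun _ _ _ _ => mem_univ _

end Partition

section Fattening

variable {k : ℕ}

def leftPt (i : Fin k) : Fin (2 * k) := ⟨2 * i, by omega⟩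

def rightPt (i : Fin k) : Fin (2 * k) := ⟨2 * i + 1, by omega⟩

def half (x : Fin (2 * k)) : Fin k := ⟨x / 2, by omega⟩

@[simp] theorem val_leftPt (i : Fin k) : (leftPt i : ℕ) = 2 * i := rfl

@[simp] theorem val_rightPt (i : Fin k) : (rightPt i : ℕ) = 2 * i + 1 := rfl

@[simp] theorem val_half (x : Fin (2 * k)) : (half x : ℕ) = x / 2 := rfl

@[simp] theorem half_leftPt (i : Fin k) : half (leftPt i) = i := Fin.ext (by simp)

@[simp] theorem half_rightPt (i : Fin k) : half (rightPt i) = i := Fin.ext (by simp; omega)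

theorem leftPt_half {x : Fin (2 * k)} (h : (x : ℕ) % 2 = 0) : leftPt (half x) = x :=
  Fin.ext (by simp; omega)

theorem rightPt_half {x : Fin (2 * k)} (h : (x : ℕ) % 2 = 1) : rightPt (half x) = x :=
  Fin.ext (by simp; omega)

theorem rightPt_strictMono : StrictMono (rightPt (k := k)) := fun i j h => by
  simp only [Fin.lt_def, val_rightPt] at h ⊢
  omega

theorem finRotate_leftPt (i : Fin k) : finRotate (2 * k) (leftPt i) = rightPt i := by
  have := val_finRotate (leftPt i)
  ext
  rw [val_rightPt]
  split_ifs at this <;> simp at * <;> omega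

def fatten (g : Perm (Fin k)) : Perm (Fin (2 * k)) :=
  Function.Involutive.toPerm
    (fun x => if (x : ℕ) % 2 = 1 then leftPt (g (half x)) else rightPt (g⁻¹ (half x))) <| by
      intro x
      by_cases hx : (x : ℕ) % 2 = 1
      · simp [hx, rightPt_half hx]
      · simp [hx, leftPt_half (by omega : (x : ℕ) % 2 = 0)]

variable (g : Perm (Fin k))

@[simp] theorem fatten_rightPt (i : Fin k) : fatten g (rightPt i) = leftPt (g i) := by
  simp [fatten]

@[simp] theorem fatten_leftPt (i : Fin k) : fatten g (leftPt i) = rightPt (g⁻¹ i) := by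
  simp [fatten]

theorem fatten_fatten (x : Fin (2 * k)) : fatten g (fatten g x) = x :=
  Function.Involutive.toPerm_involutive _ x

theorem finRotate_mul_fatten_rightPt (i : Fin k) :
    (finRotate (2 * k) * fatten g) (rightPt i) = rightPt (g i) := by
  rw [Perm.mul_apply, fatten_rightPt, finRotate_leftPt]

theorem exists_eq_rightPt_or_eq_leftPt (x : Fin (2 * k)) : ∃ i,
    x = rightPt i ∧ fatten g x = leftPt (g i) ∨ x = leftPt (g i) ∧ fatten g x = rightPt i := by
  by_cases hx : (x : ℕ) % 2 = 1
  · refine ⟨half x, .inl ⟨(rightPt_half hx).symm, ?_⟩⟩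
    rw [← fatten_rightPt, rightPt_half hx]
  · refine ⟨g⁻¹ (half x), .inr ⟨?_, ?_⟩⟩
    · simp [leftPt_half (x := x) (by omega)]
    · rw [← leftPt_half (x := x) (by omega), fatten_leftPt, half_leftPt]

theorem fatten_apply_ne (x : Fin (2 * k)) : fatten g x ≠ x := by
  obtain ⟨i, ⟨rfl, h⟩ | ⟨rfl, h⟩⟩ := exists_eq_rightPt_or_eq_leftPt g x <;>
    rw [h, Ne, Fin.ext_iff] <;> simp <;> omega

theorem sameCycle_finRotate_mul_fatten_iff {i j : Fin k} :
    (finRotate (2 * k) * fatten g).SameCycle (rightPt i) (rightPt j) ↔ g.SameCycle i j :=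
  sameCycle_iff_of_semiconj rightPt_strictMono.injective (finRotate_mul_fatten_rightPt g)

variable {g}

def rightCyclePartition (π : Perm (Fin (2 * k))) : Finset (Finset (Fin k)) :=
  univ.image fun i =>
    univ.filter fun j => (finRotate (2 * k) * π).SameCycle (rightPt i) (rightPt j)

theorem rightCyclePartition_fatten (g : Perm (Fin k)) :
    rightCyclePartition (fatten g) = orbitPartition g := by
  simp only [rightCyclePartition, orbitPartition, sameCycle_finRotate_mul_fatten_iff]

theorem _root_.IsNCPairPartition.isCyclicallyIncreasing_of_fatten
    (hπ : IsNCPairPartition (fatten g)) : IsCyclicallyIncreasing g := fun i j hij => by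
  have := hπ.isCyclicallyIncreasing (rightPt i) (rightPt j)
    ((sameCycle_finRotate_mul_fatten_iff g).2 hij)
  rwa [finRotate_mul_fatten_rightPt, rightPt_strictMono.cycBtw_iff] at this

theorem exists_eq_fatten {π : Perm (Fin (2 * k))} (hπ : IsNCPairPartition π) :
    ∃ g, π = fatten g := by
  have hpar : ∀ x : Fin (2 * k), (x : ℕ) % 2 = 1 → (π x : ℕ) % 2 = 0 := fun x hx => by
    have := hπ.val_apply_mod_two_ne x
    omega
  have hright : ∀ i, π (rightPt i) = leftPt (half (π (rightPt i))) := fun i =>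
    (leftPt_half (hpar _ (by simp))).symm
  have hinj : Function.Injective fun i => half (π (rightPt i)) := fun i j h => by
    have := hright i
    rw [show half (π (rightPt i)) = half (π (rightPt j)) from h, ← hright j] at this
    exact rightPt_strictMono.injective (π.injective this)
  set g := Equiv.ofBijective _ (Finite.injective_iff_bijective.1 hinj)
  have hfatten : ∀ i, π (rightPt i) = fatten g (rightPt i) := fun i => by
    rw [fatten_rightPt, hright i]
    rfl
  refine ⟨g, Equiv.ext fun x => ?_⟩
  by_cases hx : (x : ℕ) % 2 = 1
  · rw [← rightPt_half hx, hfatten]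
  · -- `π x` is a right point, and both `π` and `fatten g` are involutions
    have hπx : rightPt (half (π x)) = π x := rightPt_half (by
      have := hπ.val_apply_mod_two_ne x
      omega)
    have := hfatten (half (π x))
    rw [hπx, hπ.2.1] at this
    exact ((congrArg (fatten g) this).trans (fatten_fatten g _)).symm

end Fattening

theorem _root_.IsNCPartition.cycBtw_of_cycBtw {n : ℕ} {P : Finset (Finset (Fin n))}
    (hP : IsNCPartition P) {V W : Finset (Fin n)} (hV : V ∈ P) (hW : W ∈ P) (hVW : V ≠ W)
    {u v x y : Fin n} (hu : u ∈ V) (hv : v ∈ V) (hx : x ∈ W) (hy : y ∈ W)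
    (h : CycBtw u v x) : CycBtw u v y := by
  have hdisj : ∀ z ∈ V, z ≠ y := by
    rintro z hz rfl
    exact hVW ((hP.2.1 z).unique ⟨hV, hz⟩ ⟨hW, hy⟩)
  exact cycBtw_of_not_crossing (R := fun a b => a ∈ V ∧ b ∈ V)
    (S := fun a b => a ∈ W ∧ b ∈ W) (fun _ _ h => h.symm) (fun _ _ h => h.symm)
    (fun a b c d h₁ h₂ h₃ hac hbd =>
      hP.2.2 ⟨a, b, c, d, h₁, h₂, h₃, V, hV, W, hW, hVW, hac.1, hac.2, hbd.1, hbd.2⟩)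
    (fun a b c d h₁ h₂ h₃ hac hbd =>
      hP.2.2 ⟨a, b, c, d, h₁, h₂, h₃, W, hW, V, hV, hVW.symm, hac.1, hac.2, hbd.1, hbd.2⟩)
    ⟨hu, hv⟩ ⟨hx, hy⟩ (hdisj u hu).symm (hdisj v hv).symm h

section Correspondence

variable {k : ℕ} {g : Perm (Fin k)}

theorem isNCPairPartition_fatten (hg : IsCyclicallyIncreasing g)
    (hP : IsNCPartition (orbitPartition g)) : IsNCPairPartition (fatten g) := by
  refine ⟨fatten_apply_ne g, fatten_fatten g, ?_⟩
  rintro ⟨a, b, c, d, hab, hbc, hcd, rfl, rfl⟩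
  obtain ⟨i, hi⟩ := exists_eq_rightPt_or_eq_leftPt g a
  obtain ⟨j, hj⟩ := exists_eq_rightPt_or_eq_leftPt g b
  have hij : i ≠ j := by
    rintro rfl
    rcases hi with ⟨rfl, hc⟩ | ⟨rfl, hc⟩ <;>
      rcases hj with ⟨rfl, hd⟩ | ⟨rfl, hd⟩ <;>
      simp only [hc, hd, Fin.lt_def, val_rightPt, val_leftPt] at hab hbc hcd <;> omega
  -- the crossing chord of `b` has exactly one end inside the arc from `i` to `g i`
  have hxor : CycBtw i (g i) j ↔ ¬ CycBtw i (g i) (g j) := by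
    rcases hi with ⟨rfl, hc⟩ | ⟨rfl, hc⟩ <;>
      rcases hj with ⟨rfl, hd⟩ | ⟨rfl, hd⟩ <;>
      simp only [hc, hd, Fin.lt_def, val_rightPt, val_leftPt] at hab hbc hcd <;>
      unfold CycBtw <;> omega
  by_cases hsame : g.SameCycle i j
  · have := hg i j hsame
    have := hg i (g j) (sameCycle_apply_right.2 hsame)
    tauto
  · have hV := filter_sameCycle_mem_orbitPartition g i
    have hW := filter_sameCycle_mem_orbitPartition g j
    have hVW := mt filter_sameCycle_eq_iff.1 hsame
    have hi := mem_filter_sameCycle_self g i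
    have hgi := apply_mem_filter_sameCycle g i
    have hj := mem_filter_sameCycle_self g j
    have hgj := apply_mem_filter_sameCycle g j
    have := hP.cycBtw_of_cycBtw hV hW hVW hi hgi hj hgj
    have := hP.cycBtw_of_cycBtw hV hW hVW hi hgi hgj hj
    tauto

theorem isNCPartition_orbitPartition (hg : IsCyclicallyIncreasing g)
    (hπ : IsNCPairPartition (fatten g)) : IsNCPartition (orbitPartition g) := by
  have hQ := isPartition_orbitPartition g
  refine ⟨hQ.1, hQ.2, ?_⟩
  rintro ⟨a, b, c, d, hab, hbc, hcd, V, hV, W, hW, hVW, ha, hc, hb, hd⟩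
  rw [← hQ.block_eq hV ha, block_orbitPartition] at hc hVW
  rw [← hQ.block_eq hW hb, block_orbitPartition] at hd hVW
  simp only [mem_filter, mem_univ, true_and] at hc hd
  rw [Ne, filter_sameCycle_eq_iff] at hVW
  -- the step of the cycle of `a` over `b`, then the step of the cycle of `b` over `g x`
  obtain ⟨x, hax, -, hxb, hbx, hxc⟩ := hg.exists_le_lt_lt_le hc hVW hab hbc
  obtain ⟨y, -, hby, hyx, hxy, -⟩ := hg.exists_le_lt_lt_le hd
    (fun h => hVW ((sameCycle_apply_right.2 hax).trans h.symm)) hbx (hxc.trans_lt hcd)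
  refine hπ.2.2 ⟨rightPt x, rightPt y, leftPt (g x), leftPt (g y), ?_, ?_, ?_,
    fatten_rightPt g x, fatten_rightPt g y⟩ <;>
    simp only [Fin.lt_def, val_rightPt, val_leftPt] at * <;> omega

theorem isNCPairPartition_fatten_iff (hg : IsCyclicallyIncreasing g) :
    IsNCPairPartition (fatten g) ↔ IsNCPartition (orbitPartition g) :=
  ⟨isNCPartition_orbitPartition hg, isNCPairPartition_fatten hg⟩

end Correspondence

theorem ncard_leftCycles_add_card_orbitPartition {k : ℕ} {g : Perm (Fin k)} (hk : 1 ≤ k)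
    (hπ : IsNCPairPartition (fatten g)) :
    {c | c ∈ permCycles (finRotate (2 * k) * fatten g) ∧ ∀ y ∈ c, (y : ℕ) % 2 = 0}.ncard +
      #(orbitPartition g) = k + 1 := by
  set σ := finRotate (2 * k) * fatten g
  have hleft := hπ.isCyclicallyIncreasing.ncard_permCycles (fun y => (y : ℕ) % 2 = 0)
    (fun x => by rw [hπ.val_finRotate_mul_mod_two])
  have hright : #{i | g i ≤ i} = #{x : Fin (2 * k) | ¬ (x : ℕ) % 2 = 0 ∧ σ x ≤ x} := by
    refine card_nbij' rightPt half (fun i hi => ?_) (fun x hx => ?_) (fun i _ => half_rightPt i)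
      (fun x hx => rightPt_half ?_)
    · simp only [coe_filter, mem_univ, true_and, Set.mem_ofPred_eq] at hi ⊢
      rw [finRotate_mul_fatten_rightPt, rightPt_strictMono.le_iff_le, val_rightPt]
      exact ⟨by omega, hi⟩
    · simp only [coe_filter, mem_univ, true_and, Set.mem_ofPred_eq] at hx ⊢
      rw [← rightPt_half (x := x) (by omega), finRotate_mul_fatten_rightPt,
        rightPt_strictMono.le_iff_le] at hx
      exact hx.2
    · simp only [coe_filter, mem_univ, true_and, Set.mem_ofPred_eq] at hx
      omega
  have hsplit := card_filter_add_card_filter_not (s := univ.filter fun x => σ x ≤ x)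
    (fun x : Fin (2 * k) => (x : ℕ) % 2 = 0)
  rw [hleft, hπ.isCyclicallyIncreasing_of_fatten.card_orbitPartition, hright,
    ← hπ.card_filter_finRotate_mul_le hk]
  simp only [filter_filter, and_comm] at hsplit ⊢
  omega

theorem mem_NC2 {n : ℕ} {π : Perm (Fin n)} : π ∈ NC2 n ↔ IsNCPairPartition π := by
  simp [NC2]

theorem mem_NCset {k : ℕ} {P : Finset (Finset (Fin k))} : P ∈ NCset k ↔ IsNCPartition P := by
  simp [NCset]

end NonCrossing

open Finset NonCrossing

open Classical in
/-- `Fin (2*k)` represents `{1, …, 2k}`: position `x` is the number `x + 1`, which is odd iff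
`(x : ℕ) % 2 = 0`. -/
theorem stmt16 (k m : ℕ) (hk : 1 ≤ k) (hm : m ≤ k - 1) :
    ((NC2 (2 * k)).filter (fun π =>
        {c : Set (Fin (2 * k)) |
            c ∈ permCycles (finRotate (2 * k) * π) ∧
            ∀ y ∈ c, (y : ℕ) % 2 = 0}.ncard = m + 1)).card =
      ((NCset k).filter (fun P => P.card = k - m)).card := by
  classical
  refine card_bij' (fun π _ => rightCyclePartition π)
    (fun P hP => fatten (blockRotation (mem_NCset.1 (mem_filter.1 hP).1).isPartition))
    (fun π hπ => ?_) (fun P hP => ?_) (fun π hπ => ?_) (fun P hP => ?_)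
  · obtain ⟨hπ, hcount⟩ := mem_filter.1 hπ
    obtain ⟨g, rfl⟩ := exists_eq_fatten (mem_NC2.1 hπ)
    have hπ := mem_NC2.1 hπ
    have := ncard_leftCycles_add_card_orbitPartition hk hπ
    rw [rightCyclePartition_fatten]
    exact mem_filter.2 ⟨mem_NCset.2 ((isNCPairPartition_fatten_iff
      hπ.isCyclicallyIncreasing_of_fatten).1 hπ), by omega⟩
  · obtain ⟨hP, hcard⟩ := mem_filter.1 hP
    have hP := mem_NCset.1 hP
    have hgP := orbitPartition_blockRotation hP.isPartition
    have hπ := (isNCPairPartition_fatten_iff (isCyclicallyIncreasing_blockRotation _)).2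
      (hgP ▸ hP)
    have := ncard_leftCycles_add_card_orbitPartition hk hπ
    rw [hgP] at this
    exact mem_filter.2 ⟨mem_NC2.2 hπ, by omega⟩
  · obtain ⟨g, rfl⟩ := exists_eq_fatten (mem_NC2.1 (mem_filter.1 hπ).1)
    congr 1
    exact blockRotation_eq_of_eq_orbitPartition _
      (mem_NC2.1 (mem_filter.1 hπ).1).isCyclicallyIncreasing_of_fatten
      (rightCyclePartition_fatten g)
  · rw [rightCyclePartition_fatten, orbitPartition_blockRotation]
end
end

section
/- Let m ≥ 1, let π be a non-crossing pair partition of {1,…,2m}, and let p, n ≥ 1. Then the number of pairs of tuples (i_1,…,i_{2m}) ∈ {1,…,p}^{2m} and (j_1,…,j_{2m}) ∈ {1,…,n}^{2m} satisfying, for every pair {r,s} of π, the constraints j_r = j_s, i_r = i_{s+1} and i_s = i_{r+1} (with the index convention i_{2m+1} := i_1) equals exactly p^{m+1} · n^m. -/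
noncomputable section

open Equiv Equiv.Perm

namespace NCAux

/-- number of cycles (orbits, incl. fixed points) of a permutation -/
def ncyc {α : Type*} (τ : Perm α) : ℕ := Nat.card (Quotient (SameCycle.setoid τ))

variable {α β : Type*}

theorem inv_pow {τ : Perm α} {f : α → β} (hf : ∀ x, f (τ x) = f x) :
    ∀ (k : ℕ) (x), f ((τ ^ k) x) = f x := by
  intro k
  induction k with
  | zero => intro x; rfl
  | succ k ih => intro x; rw [pow_succ', Perm.mul_apply, hf, ih]

/-- functions constant on cycles ≃ functions on the cycle quotient -/
def invEquiv [Finite α] (τ : Perm α) :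
    {f : α → β // ∀ x, f (τ x) = f x} ≃ (Quotient (SameCycle.setoid τ) → β) where
  toFun f := Quotient.lift f.1 (by
    intro a b h
    obtain ⟨i, _, rfl⟩ := Equiv.Perm.SameCycle.exists_pow_eq' h
    exact (inv_pow f.2 i a).symm)
  invFun g := ⟨fun x => g ⟦x⟧, fun x => congrArg g (Quotient.sound (Equiv.Perm.sameCycle_apply_left.mpr (Equiv.Perm.SameCycle.refl τ x)))⟩
  left_inv f := rfl
  right_inv g := by funext q; induction q using Quotient.ind; rfl

theorem card_inv [Finite α] [Finite β] (τ : Perm α) :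
    Nat.card {f : α → β // ∀ x, f (τ x) = f x} = Nat.card β ^ ncyc τ := by
  rw [Nat.card_congr (invEquiv τ), Nat.card_fun]; rfl

end NCAux

namespace NCAux
open Classical

theorem invol_pow {N : ℕ} {π : Perm (Fin N)} (h2 : ∀ r, π (π r) = r) (x : Fin N) :
    ∀ i : ℕ, (π ^ i) x = x ∨ (π ^ i) x = π x := by
  intro i
  induction i with
  | zero => exact Or.inl rfl
  | succ k ih =>
    rw [pow_succ', Perm.mul_apply]
    rcases ih with h | h
    · rw [h]; exact Or.inr rfl
    · rw [h, h2]; exact Or.inl rfl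

theorem samecycle_invol {N : ℕ} {π : Perm (Fin N)} (h2 : ∀ r, π (π r) = r) {x y : Fin N}
    (h : SameCycle π x y) : y = x ∨ y = π x := by
  obtain ⟨i, _, rfl⟩ := h.exists_pow_eq'
  exact invol_pow h2 x i

theorem ncyc_invol {N m : ℕ} (hN : N = 2 * m) (π : Perm (Fin N))
    (h1 : ∀ r, π r ≠ r) (h2 : ∀ r, π (π r) = r) : ncyc π = m := by
  set s := SameCycle.setoid π
  have : Fintype (Quotient s) := Fintype.ofFinite _
  have key : Fintype.card (Fin N) = 2 * Fintype.card (Quotient s) := by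
    rw [Fintype.card_congr (Equiv.sigmaFiberEquiv (Quotient.mk s)).symm,
      Fintype.card_sigma]
    have hfib : ∀ q : Quotient s, Fintype.card {x // Quotient.mk s x = q} = 2 := by
      intro q
      induction q using Quotient.ind with
      | _ a =>
        have e1 : {x // Quotient.mk s x = Quotient.mk s a} ≃ ({a, π a} : Finset (Fin N)) := by
          refine Equiv.subtypeEquivRight fun x => ?_
          rw [Quotient.eq]
          constructor
          · intro h
            rcases samecycle_invol h2 h with h | h
            · simp [← h]
            · simp [Finset.mem_insert]
              right
              rw [h, h2]
          · intro h
            simp [Finset.mem_insert] at h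
            rcases h with rfl | rfl
            · exact SameCycle.refl _ _
            · exact (Equiv.Perm.sameCycle_apply_left).mpr (SameCycle.refl π a)
        rw [Fintype.card_congr e1, Fintype.card_coe, Finset.card_pair (Ne.symm (h1 a))]
    simp [hfib, Finset.sum_const, mul_comm]
  rw [Fintype.card_fin] at key
  have hm : Fintype.card (Quotient s) = m := by omega
  show Nat.card (Quotient s) = m
  rw [Nat.card_eq_fintype_card]
  exact hm

end NCAux

open Equiv Equiv.Perm

namespace NCAux

theorem rotval {N : ℕ} (i : Fin N) : ((finRotate N i : Fin N) : ℕ) = ((i : ℕ) + 1) % N := by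
  cases N with
  | zero => exact absurd i.2 (by omega)
  | succ n =>
    rw [coe_finRotate]
    split_ifs with h
    · rw [h]; simp [Fin.last]
    · have : (i : ℕ) < n := by
        rcases Nat.lt_or_ge (i : ℕ) n with h' | h'
        · exact h'
        · exact absurd (Fin.ext (by simp [Fin.last]; omega : (i : ℕ) = (Fin.last n : ℕ))) h
      rw [Nat.mod_eq_of_lt (by omega)]

/-- the embedding of `Fin M` into `Fin (M+2)` skipping positions `rv` and `rv+1`. -/
def eup (M rv : ℕ) (x : Fin M) : Fin (M + 2) :=
  if (x : ℕ) < rv then ⟨x, by omega⟩ else ⟨(x : ℕ) + 2, by omega⟩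

theorem eup_val (M rv : ℕ) (x : Fin M) :
    ((eup M rv x : Fin (M+2)) : ℕ) = if (x : ℕ) < rv then (x : ℕ) else (x : ℕ) + 2 := by
  unfold eup; split_ifs <;> rfl

theorem eup_strictMono (M rv : ℕ) : StrictMono (eup M rv) := by
  intro x y h
  have : (x : ℕ) < y := h
  simp only [Fin.lt_def, eup_val]
  split_ifs <;> omega

theorem eup_inj (M rv : ℕ) : Function.Injective (eup M rv) :=
  (eup_strictMono M rv).injective

theorem eup_ne (M rv : ℕ) (hr : rv + 1 < M + 2) (x : Fin M) :
    ((eup M rv x : Fin (M+2)) : ℕ) ≠ rv ∧ ((eup M rv x : Fin (M+2)) : ℕ) ≠ rv + 1 := by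
  rw [eup_val]; split_ifs <;> omega

theorem eup_surj (M rv : ℕ) (hr : rv + 1 < M + 2) (z : Fin (M + 2))
    (h1 : (z : ℕ) ≠ rv) (h2 : (z : ℕ) ≠ rv + 1) : ∃ x, eup M rv x = z := by
  rcases Nat.lt_or_ge (z : ℕ) rv with h | h
  · exact ⟨⟨z, by omega⟩, Fin.ext (by rw [eup_val]; simp [h])⟩
  · refine ⟨⟨(z : ℕ) - 2, by omega⟩, Fin.ext ?_⟩
    rw [eup_val]
    have hz2 : rv + 2 ≤ (z : ℕ) := by omega
    simp only []
    split_ifs with hh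
    · omega
    · omega

end NCAux

namespace NCAux

/-- Data for the reduction step: a fpf involution on `Fin (M+2)` with an
adjacent pair at positions `rv`, `rv+1`. -/
structure Red (M : ℕ) where
  rv : ℕ
  π : Perm (Fin (M + 2))
  hr : rv + 1 < M + 2
  h1 : ∀ x, π x ≠ x
  h2 : ∀ x, π (π x) = x
  hadj : π ⟨rv, by omega⟩ = ⟨rv + 1, hr⟩

namespace Red

variable {M : ℕ} (R : Red M)

theorem pi_maps (x : Fin M) :
    ((R.π (eup M R.rv x) : Fin (M+2)) : ℕ) ≠ R.rv ∧
    ((R.π (eup M R.rv x) : Fin (M+2)) : ℕ) ≠ R.rv + 1 := by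
  constructor
  · intro h
    have hv : R.π (eup M R.rv x) = ⟨R.rv, by have := R.hr; omega⟩ := Fin.ext h
    have h' : eup M R.rv x = R.π ⟨R.rv, by have := R.hr; omega⟩ := by
      rw [← hv, R.h2]
    rw [R.hadj] at h'
    exact (eup_ne M R.rv R.hr x).2 (congrArg Fin.val h')
  · intro h
    have hv : R.π (eup M R.rv x) = ⟨R.rv + 1, R.hr⟩ := Fin.ext h
    rw [← R.hadj] at hv
    have h' := R.π.injective hv
    exact (eup_ne M R.rv R.hr x).1 (congrArg Fin.val h')

def redFun (x : Fin M) : Fin M :=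
  Classical.choose (eup_surj M R.rv R.hr (R.π (eup M R.rv x)) (R.pi_maps x).1 (R.pi_maps x).2)

theorem bridge0 (x : Fin M) : eup M R.rv (R.redFun x) = R.π (eup M R.rv x) :=
  Classical.choose_spec (eup_surj M R.rv R.hr (R.π (eup M R.rv x)) (R.pi_maps x).1
    (R.pi_maps x).2)

theorem redFun_inj : Function.Injective R.redFun := by
  intro x y h
  have h' := congrArg (eup M R.rv) h
  rw [R.bridge0, R.bridge0] at h'
  exact eup_inj M R.rv (R.π.injective h')

def π' : Perm (Fin M) :=
  Equiv.ofBijective _ ((Finite.injective_iff_bijective).mp R.redFun_inj)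

theorem bridge (x : Fin M) : eup M R.rv (R.π' x) = R.π (eup M R.rv x) :=
  R.bridge0 x

theorem π'_ne (x : Fin M) : R.π' x ≠ x := by
  intro h
  have hb := R.bridge x
  rw [h] at hb
  exact R.h1 _ hb.symm

theorem π'_invol (x : Fin M) : R.π' (R.π' x) = x := by
  apply eup_inj M R.rv
  rw [R.bridge, R.bridge, R.h2]

theorem π'_nc
    (h3 : ¬ ∃ a b c d : Fin (M+2), a < b ∧ b < c ∧ c < d ∧ R.π a = c ∧ R.π b = d) :
    ¬ ∃ a b c d : Fin M, a < b ∧ b < c ∧ c < d ∧ R.π' a = c ∧ R.π' b = d := by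
  rintro ⟨a, b, c, d, hab, hbc, hcd, hac, hbd⟩
  refine h3 ⟨eup M R.rv a, eup M R.rv b, eup M R.rv c, eup M R.rv d,
    eup_strictMono M R.rv hab, eup_strictMono M R.rv hbc, eup_strictMono M R.rv hcd, ?_, ?_⟩
  · rw [← R.bridge a, hac]
  · rw [← R.bridge b, hbd]

end Red
end NCAux

namespace NCAux

theorem step_val (M rv wv : ℕ) (hr : rv + 1 < M + 2) (hw : wv < M)
    (A B u C : ℕ) (hA : A = if wv < rv then wv else wv + 2)
    (hB : B = (A + 1) % (M + 2)) (hu : u = (wv + 1) % M)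
    (hC : C = if u < rv then u else u + 2) :
    (B = C ∧ B ≠ rv) ∨ (B = rv ∧ (rv + 2) % (M + 2) = C) := by
  have hM : 0 < M := by omega
  have hAle : A ≤ M + 1 := by rw [hA]; split_ifs <;> omega
  have hBe : B = if A + 1 = M + 2 then 0 else A + 1 := by
    rw [hB]; split_ifs with h
    · rw [h, Nat.mod_self]
    · exact Nat.mod_eq_of_lt (by omega)
  have hue : u = if wv + 1 = M then 0 else wv + 1 := by
    rw [hu]; split_ifs with h
    · rw [h, Nat.mod_self]
    · exact Nat.mod_eq_of_lt (by omega)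
  have hrr : (rv + 2) % (M + 2) = if rv = M then 0 else rv + 2 := by
    split_ifs with h
    · rw [h]; exact Nat.mod_self _
    · exact Nat.mod_eq_of_lt (by omega)
  rw [hrr]
  subst hA hC
  rw [hBe, hue]
  split_ifs <;> omega

end NCAux

namespace NCAux
namespace Red

variable {M : ℕ} (R : Red M)

def σb : Perm (Fin (M + 2)) := R.π.trans (finRotate (M + 2))

def σs : Perm (Fin M) := R.π'.trans (finRotate M)

theorem σb_apply (z : Fin (M + 2)) : R.σb z = finRotate (M + 2) (R.π z) := rfl

theorem σs_apply (x : Fin M) : R.σs x = finRotate M (R.π' x) := rfl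

theorem σb_fix : R.σb ⟨R.rv + 1, R.hr⟩ = ⟨R.rv + 1, R.hr⟩ := by
  have h : R.π ⟨R.rv + 1, R.hr⟩ = ⟨R.rv, by have := R.hr; omega⟩ := by
    rw [← R.hadj, R.h2]
  apply Fin.ext
  rw [σb_apply, h, rotval]
  exact Nat.mod_eq_of_lt (show R.rv + 1 < M + 2 from R.hr)

theorem rot_step (x : Fin M) :
    (R.σb (eup M R.rv x) = eup M R.rv (R.σs x)) ∨
    (((R.σb (eup M R.rv x)) : ℕ) = R.rv ∧
      R.σb (R.σb (eup M R.rv x)) = eup M R.rv (R.σs x)) := by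
  have hrM : R.rv + 1 < M + 2 := R.hr
  set w := R.π' x with hw
  have hwv : (w : ℕ) < M := w.2
  have hBval : (R.σb (eup M R.rv x) : ℕ) = (((eup M R.rv w : Fin (M+2)) : ℕ) + 1) % (M+2) := by
    rw [σb_apply, ← R.bridge x, rotval]
  have hCval : ((eup M R.rv (R.σs x) : Fin (M+2)) : ℕ) =
      if ((finRotate M w : Fin M) : ℕ) < R.rv then ((finRotate M w : Fin M) : ℕ)
      else ((finRotate M w : Fin M) : ℕ) + 2 := by
    rw [σs_apply, ← hw, eup_val]
  have key := step_val M R.rv (w : ℕ) R.hr hwv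
    ((eup M R.rv w : Fin (M+2)) : ℕ) (R.σb (eup M R.rv x) : ℕ)
    ((finRotate M w : Fin M) : ℕ) ((eup M R.rv (R.σs x) : Fin (M+2)) : ℕ)
    (eup_val M R.rv w) hBval (rotval w) hCval
  rcases key with ⟨hBC, _⟩ | ⟨hBr, hC⟩
  · exact Or.inl (Fin.ext hBC)
  · refine Or.inr ⟨hBr, ?_⟩
    have hfix : R.σb (eup M R.rv x) = ⟨R.rv, by have := R.hr; omega⟩ := Fin.ext hBr
    rw [hfix]
    apply Fin.ext
    rw [σb_apply, R.hadj, rotval, ← hC]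

end Red
end NCAux

namespace NCAux
namespace Red

variable {M : ℕ} (R : Red M)

theorem samecycle_up (x : Fin M) :
    SameCycle R.σb (eup M R.rv x) (eup M R.rv (R.σs x)) := by
  rcases R.rot_step x with h | ⟨_, h⟩
  · rw [← h]; exact sameCycle_apply_right.mpr (SameCycle.refl _ _)
  · rw [← h]
    exact sameCycle_apply_right.mpr (sameCycle_apply_right.mpr (SameCycle.refl _ _))

theorem samecycle_up_pow (l : ℕ) (x : Fin M) :
    SameCycle R.σb (eup M R.rv x) (eup M R.rv ((R.σs ^ l) x)) := by
  induction l with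
  | zero => exact SameCycle.refl _ _
  | succ l ih =>
    rw [pow_succ', Perm.mul_apply]
    exact ih.trans (R.samecycle_up ((R.σs ^ l) x))

theorem track (k : ℕ) (x : Fin M) :
    ∃ l : ℕ, (R.σb ^ k) (eup M R.rv x) = eup M R.rv ((R.σs ^ l) x) ∨
      ((((R.σb ^ k) (eup M R.rv x) : Fin (M+2)) : ℕ) = R.rv ∧
        (R.σb ^ (k+1)) (eup M R.rv x) = eup M R.rv ((R.σs ^ l) x)) := by
  induction k with
  | zero => exact ⟨0, Or.inl rfl⟩
  | succ k ih =>
    obtain ⟨l, h | ⟨hrv, h⟩⟩ := ih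
    · rcases R.rot_step ((R.σs ^ l) x) with h' | ⟨hr', h'⟩
      · refine ⟨l + 1, Or.inl ?_⟩
        rw [pow_succ', Perm.mul_apply, h, h', pow_succ', Perm.mul_apply]

      · refine ⟨l + 1, Or.inr ⟨?_, ?_⟩⟩
        · rw [pow_succ', Perm.mul_apply, h]; exact hr'
        · rw [pow_succ', Perm.mul_apply, pow_succ', Perm.mul_apply, h, h']
          rw [pow_succ', Perm.mul_apply]

    · exact ⟨l, Or.inl h⟩

theorem sF_val : ((⟨R.rv + 1, R.hr⟩ : Fin (M + 2)) : ℕ) = R.rv + 1 := rfl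

theorem not_samecycle_sF (x : Fin M) :
    ¬ SameCycle R.σb (eup M R.rv x) ⟨R.rv + 1, R.hr⟩ := by
  intro h
  obtain ⟨k, _, hk⟩ := h.exists_pow_eq'
  obtain ⟨l, h' | ⟨hrv, _⟩⟩ := R.track k x
  · rw [hk] at h'
    exact (eup_ne M R.rv R.hr ((R.σs ^ l) x)).2 (congrArg Fin.val h'.symm)
  · rw [hk] at hrv
    simp [sF_val] at hrv
theorem samecycle_down {x y : Fin M}
    (h : SameCycle R.σb (eup M R.rv x) (eup M R.rv y)) : SameCycle R.σs x y := by
  obtain ⟨k, _, hk⟩ := h.exists_pow_eq'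
  obtain ⟨l, h' | ⟨hrv, _⟩⟩ := R.track k x
  · rw [hk] at h'
    have := eup_inj M R.rv h'.symm
    exact ⟨(l : ℤ), by rw [zpow_natCast, this]⟩
  · rw [hk] at hrv
    exact absurd hrv (eup_ne M R.rv R.hr y).1

end Red
end NCAux

namespace NCAux
namespace Red

variable {M : ℕ} (R : Red M)

theorem samecycle_up' {x y : Fin M} (h : SameCycle R.σs x y) :
    SameCycle R.σb (eup M R.rv x) (eup M R.rv y) := by
  obtain ⟨l, _, rfl⟩ := h.exists_pow_eq'
  exact R.samecycle_up_pow l x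

theorem ncyc_rel (hM : 0 < M) : ncyc R.σb = ncyc R.σs + 1 := by
  classical
  set sF : Fin (M + 2) := ⟨R.rv + 1, R.hr⟩ with hsF
  set Qb := Quotient (SameCycle.setoid R.σb)
  set Qs := Quotient (SameCycle.setoid R.σs)
  let F : Qs → {q : Qb // q ≠ ⟦sF⟧} :=
    Quotient.lift
      (fun x => (⟨⟦eup M R.rv x⟧, fun hq => R.not_samecycle_sF x (Quotient.eq.mp hq)⟩ :
        {q : Qb // q ≠ ⟦sF⟧}))
      (fun a b h => Subtype.ext (Quotient.sound (R.samecycle_up' h)))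
  have hFbij : Function.Bijective F := by
    constructor
    · intro q1 q2
      induction q1 using Quotient.ind with
      | _ a =>
        induction q2 using Quotient.ind with
        | _ b =>
          intro h
          have : (⟦eup M R.rv a⟧ : Qb) = ⟦eup M R.rv b⟧ := congrArg Subtype.val h
          exact Quotient.sound (R.samecycle_down (Quotient.eq.mp this))
    · rintro ⟨q, hq⟩
      obtain ⟨z, rfl⟩ := Quotient.exists_rep q
      by_cases hz : (z : ℕ) = R.rv
      · have hzz : z = ⟨R.rv, by have := R.hr; omega⟩ := Fin.ext hz
        have hz'v : ((R.σb z : Fin (M+2)) : ℕ) = (R.rv + 2) % (M + 2) := by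
          rw [hzz, σb_apply, R.hadj, rotval]
        have h1 : ((R.σb z : Fin (M+2)) : ℕ) ≠ R.rv := by
          rw [hz'v]
          have := R.hr
          rcases Nat.lt_or_ge (R.rv + 2) (M + 2) with h | h
          · rw [Nat.mod_eq_of_lt h]; omega
          · have : R.rv = M := by omega
            rw [this]
            simp [Nat.mod_self]
            omega
        have h2 : ((R.σb z : Fin (M+2)) : ℕ) ≠ R.rv + 1 := by
          rw [hz'v]
          have := R.hr
          rcases Nat.lt_or_ge (R.rv + 2) (M + 2) with h | h
          · rw [Nat.mod_eq_of_lt h]; omega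
          · have : R.rv = M := by omega
            rw [this]
            simp [Nat.mod_self]
        obtain ⟨x, hx⟩ := eup_surj M R.rv R.hr (R.σb z) h1 h2
        refine ⟨⟦x⟧, Subtype.ext ?_⟩
        show (⟦eup M R.rv x⟧ : Qb) = ⟦z⟧
        rw [hx]
        exact Quotient.sound (sameCycle_apply_left.mpr (SameCycle.refl _ _))
      · have hz2 : (z : ℕ) ≠ R.rv + 1 := by
          intro h
          exact hq (congrArg _ (Fin.ext h))
        obtain ⟨x, hx⟩ := eup_surj M R.rv R.hr z hz hz2
        refine ⟨⟦x⟧, Subtype.ext ?_⟩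
        show (⟦eup M R.rv x⟧ : Qb) = ⟦z⟧
        rw [hx]
  have e1 : Qs ≃ {q : Qb // q ≠ ⟦sF⟧} := Equiv.ofBijective F hFbij
  have e2 : Option {q : Qb // q ≠ ⟦sF⟧} ≃ Qb := Equiv.optionSubtypeNe _
  show Nat.card Qb = Nat.card Qs + 1
  have hfin : Fintype {q : Qb // q ≠ ⟦sF⟧} := Fintype.ofFinite _
  rw [← Nat.card_congr e2, Nat.card_congr e1, Nat.card_eq_fintype_card,
    Nat.card_eq_fintype_card, Fintype.card_option]

end Red
end NCAux



namespace NCAux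
open Equiv Equiv.Perm

theorem ncyc_one {α : Type*} : ncyc (1 : Perm α) = Nat.card α := by
  refine Nat.card_congr ⟨Quotient.lift id (fun a b hab => ?_), Quotient.mk _, ?_, ?_⟩
  · exact Equiv.Perm.sameCycle_one.mp hab
  · intro q; induction q using Quotient.ind with | _ a => rfl
  · intro a; rfl

theorem adj_pair {N : ℕ} (hN2 : 2 ≤ N) (π : Perm (Fin N))
    (h1 : ∀ x, π x ≠ x) (h2 : ∀ x, π (π x) = x)
    (h3 : ¬ ∃ a b c d : Fin N, a < b ∧ b < c ∧ c < d ∧ π a = c ∧ π b = d) :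
    ∃ rv : ℕ, ∃ hr : rv + 1 < N, π ⟨rv, by omega⟩ = ⟨rv + 1, hr⟩ := by
  classical
  set S : Finset (Fin N) := Finset.univ.filter (fun a => (a : ℕ) < ((π a : Fin N) : ℕ))
    with hSdef
  have hS : S.Nonempty := by
    refine ⟨⟨0, by omega⟩, ?_⟩
    simp only [hSdef, Finset.mem_filter, Finset.mem_univ, true_and]
    have hne := h1 ⟨0, by omega⟩
    have : ((π ⟨0, by omega⟩ : Fin N) : ℕ) ≠ 0 := by
      intro h
      exact hne (Fin.ext h)
    omega
  obtain ⟨a, haS, hmin⟩ := S.exists_min_image (fun a => ((π a : Fin N) : ℕ) - (a : ℕ)) hS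
  have hac : (a : ℕ) < ((π a : Fin N) : ℕ) := by
    simpa [hSdef] using haS
  have hclaim : ((π a : Fin N) : ℕ) = (a : ℕ) + 1 := by
    by_contra hgap'
    have hgap : (a : ℕ) + 1 < ((π a : Fin N) : ℕ) := by omega
    have hcN : ((π a : Fin N) : ℕ) < N := (π a).2
    set b : Fin N := ⟨(a : ℕ) + 1, by omega⟩ with hb
    have hba : b ≠ a := by
      intro h
      have := congrArg Fin.val h
      simp [hb] at this
    have hdb : π b ≠ b := h1 b
    have hd_ne_a : π b ≠ a := by
      intro h
      have : π (π b) = π a := congrArg π h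
      rw [h2] at this
      have := congrArg Fin.val this
      simp [hb] at this
      omega
    have hd_ne_c : π b ≠ π a := fun h => hba (π.injective h)
    rcases Nat.lt_or_ge ((b : ℕ)) ((π b : Fin N) : ℕ) with hlt | hge
    · -- d > b
      have hbS : b ∈ S := by
        simp only [hSdef, Finset.mem_filter, Finset.mem_univ, true_and]
        exact hlt
      have hminb := hmin b hbS
      rcases Nat.lt_trichotomy ((π b : Fin N) : ℕ) ((π a : Fin N) : ℕ) with h | h | h
      · -- d < c : contradicts minimality
        have hbv : (b : ℕ) = (a : ℕ) + 1 := rfl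
        omega
      · exact hd_ne_c (Fin.ext h)
      · -- crossing a < b < c < d
        refine h3 ⟨a, b, π a, π b, ?_, ?_, ?_, rfl, rfl⟩
        · rw [Fin.lt_def]; simp [hb]
        · rw [Fin.lt_def]; simp [hb]; omega
        · rw [Fin.lt_def]; exact h
    · -- d < b, so d < a
      have hd_lt_a : ((π b : Fin N) : ℕ) < (a : ℕ) := by
        have hbv : (b : ℕ) = (a : ℕ) + 1 := rfl
        have : ((π b : Fin N) : ℕ) ≠ (a : ℕ) := fun h => hd_ne_a (Fin.ext h)
        have : ((π b : Fin N) : ℕ) ≠ (b : ℕ) := fun h => hdb (Fin.ext h)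
        omega
      refine h3 ⟨π b, a, b, π a, ?_, ?_, ?_, ?_, rfl⟩
      · rw [Fin.lt_def]; exact hd_lt_a
      · rw [Fin.lt_def]; simp [hb]
      · rw [Fin.lt_def]; simp [hb]; omega
      · rw [h2]
  refine ⟨(a : ℕ), by omega, ?_⟩
  have ha' : (⟨(a : ℕ), by omega⟩ : Fin N) = a := rfl
  rw [ha']
  exact Fin.ext hclaim

theorem ncyc_key (N : ℕ) : ∀ m : ℕ, N = 2 * m → 1 ≤ m → ∀ π : Perm (Fin N),
    IsNCPairPartition π → ncyc (π.trans (finRotate N)) = m + 1 := by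
  induction N using Nat.strong_induction_on with
  | _ N ih =>
    intro m hN hm π hπ
    obtain ⟨h1, h2, h3⟩ := hπ
    rcases Nat.lt_or_ge m 2 with hm2 | hm2
    · -- base case m = 1
      have hm1 : m = 1 := by omega
      subst hm1
      subst hN
      have hfix : ∀ x : Fin (2 * 1), (π.trans (finRotate (2 * 1))) x = x := by
        intro x
        apply Fin.ext
        have h1x : ((π x : Fin (2*1)) : ℕ) ≠ (x : ℕ) := fun h => h1 x (Fin.ext h)
        have hπx := (π x).2
        have hx := x.2
        show ((finRotate (2*1) (π x) : Fin (2*1)) : ℕ) = (x : ℕ)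
        rw [rotval]
        omega
      have : π.trans (finRotate (2 * 1)) = 1 := Equiv.ext hfix
      rw [this, ncyc_one, Nat.card_eq_fintype_card, Fintype.card_fin]
    · -- inductive step
      obtain ⟨rv, hr, hadj⟩ := adj_pair (by omega) π h1 h2 h3
      obtain ⟨M, rfl⟩ : ∃ M, N = M + 2 := ⟨N - 2, by omega⟩
      set R : Red M := ⟨rv, π, hr, h1, h2, hadj⟩ with hR
      have hIH := ih M (by omega) (m - 1) (by omega) (by omega) R.π'
        ⟨R.π'_ne, R.π'_invol, R.π'_nc h3⟩
      have hred := R.ncyc_rel (by omega)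
      have hσ : π.trans (finRotate (M + 2)) = R.σb := rfl
      have hσs : R.π'.trans (finRotate M) = R.σs := rfl
      rw [hσ, hred, ← hσs, hIH]
      omega

end NCAux


-- MAIN PART



/-- For each pair `{r, s}` of the pairing `π` (i.e. `s = π r`), the constraints are
`j_r = j_s`, `i_r = i_{s+1}` and `i_s = i_{r+1}`, with the cyclic successor convention
`i_{2m+1} = i_1` realised by `finRotate`. -/
theorem stmt17 (m : ℕ) (hm : 1 ≤ m)
    (π : Equiv.Perm (Fin (2 * m))) (hπ : IsNCPairPartition π)
    (p n : ℕ) (hp : 1 ≤ p) (hn : 1 ≤ n) :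
    Nat.card {q : (Fin (2 * m) → Fin p) × (Fin (2 * m) → Fin n) //
        ∀ r : Fin (2 * m),
          q.2 r = q.2 (π r) ∧
          q.1 r = q.1 (finRotate (2 * m) (π r)) ∧
          q.1 (π r) = q.1 (finRotate (2 * m) r)} =
      p ^ (m + 1) * n ^ m := by
  obtain ⟨h1, h2, h3⟩ := hπ
  set σ := π.trans (finRotate (2 * m)) with hσ
  have hiff : ∀ q : (Fin (2 * m) → Fin p) × (Fin (2 * m) → Fin n),
      (∀ r : Fin (2 * m),
          q.2 r = q.2 (π r) ∧
          q.1 r = q.1 (finRotate (2 * m) (π r)) ∧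
          q.1 (π r) = q.1 (finRotate (2 * m) r)) ↔
      ((∀ x, q.1 (σ x) = q.1 x) ∧ (∀ x, q.2 (π x) = q.2 x)) := by
    intro q
    constructor
    · intro H
      exact ⟨fun x => ((H x).2.1).symm, fun x => ((H x).1).symm⟩
    · intro ⟨hi, hj⟩ r
      refine ⟨(hj r).symm, (hi r).symm, ?_⟩
      have := (hi (π r)).symm
      simpa [hσ, h2] using this
  have e : {q : (Fin (2 * m) → Fin p) × (Fin (2 * m) → Fin n) //
        ∀ r : Fin (2 * m),
          q.2 r = q.2 (π r) ∧
          q.1 r = q.1 (finRotate (2 * m) (π r)) ∧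
          q.1 (π r) = q.1 (finRotate (2 * m) r)} ≃
      ({i : Fin (2 * m) → Fin p // ∀ x, i (σ x) = i x} ×
       {j : Fin (2 * m) → Fin n // ∀ x, j (π x) = j x}) :=
    (Equiv.subtypeEquivRight hiff).trans
      (Equiv.subtypeProdEquivProd (p := fun i : Fin (2 * m) → Fin p => ∀ x, i (σ x) = i x)
        (q := fun j : Fin (2 * m) → Fin n => ∀ x, j (π x) = j x))
  rw [Nat.card_congr e, Nat.card_prod, NCAux.card_inv, NCAux.card_inv]
  have hπc : NCAux.ncyc π = m := NCAux.ncyc_invol rfl π h1 h2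
  have hσc : NCAux.ncyc σ = m + 1 := NCAux.ncyc_key (2 * m) m rfl hm π ⟨h1, h2, h3⟩
  rw [hπc, hσc, Nat.card_eq_fintype_card, Nat.card_eq_fintype_card,
    Fintype.card_fin, Fintype.card_fin]
end
end
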